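/- arXiv:0911.3604 — 6 statements merged into one kernel-verified Lean document; each statement's English description precedes it below -/
import Mathlib

section
/- The number of ways to factor an n-cycle in the symmetric group S_n into a product of two involutions is exactly n. That is, if π is an n-cycle, the number of pairs (σ, τ) of involutions with π = τ ∘ σ equals n. -/
/-!
Writing `π = τ * σ`, the second factor is forced to be `τ = π * σ`, so factorizations into two
involutions are the same as involutions `σ` with `σ * π * σ = π⁻¹`. For an `n`-cycle `π` such a
`σ` is determined by its value at one point `a`, because `σ (π ^ k a) = π ^ (-k) (σ a)` and
every point has the form `π ^ k a`. Conversely every value is attained: `π` is conjugate to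
`π⁻¹`, which yields a reversing involution `ρ` fixing `a`, and then `π ^ k * ρ` is a reversing
involution sending `a` to `π ^ k a`.
-/

open Equiv

section Group

variable {G : Type*} [Group G]

def IsInvolutiveReverser (g s : G) : Prop :=
  s * s = 1 ∧ SemiconjBy s g g⁻¹

theorem isInvolutiveReverser_iff {g s : G} :
    IsInvolutiveReverser g s ↔ s * s = 1 ∧ g * s * (g * s) = 1 := by
  refine and_congr_right fun hs => ⟨fun h => ?_, fun h => ?_⟩
  · rw [mul_assoc, ← mul_assoc s, h.eq, mul_assoc, hs, mul_one, mul_inv_cancel]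
  · have hsgs : s * g * s = g⁻¹ := eq_inv_of_mul_eq_one_right (by simpa only [mul_assoc] using h)
    rw [SemiconjBy, ← hsgs, mul_assoc, hs, mul_one]

theorem IsInvolutiveReverser.zpow_mul {g s : G} (h : IsInvolutiveReverser g s) (k : ℤ) :
    IsInvolutiveReverser g (g ^ k * s) := by
  refine ⟨?_, SemiconjBy.mul_left ((Commute.refl g).inv_right.zpow_left k) h.2⟩
  rw [mul_assoc, ← mul_assoc s, (h.2.zpow_right k).eq, mul_assoc, h.1, mul_one, inv_zpow,
    mul_inv_cancel]

def involutionFactorizationsEquiv (g : G) :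
    {p : G × G // p.1 * p.1 = 1 ∧ p.2 * p.2 = 1 ∧ g = p.2 * p.1} ≃
      {s : G // IsInvolutiveReverser g s} where
  toFun p := ⟨p.1.1, isInvolutiveReverser_iff.2 ⟨p.2.1, by
    obtain ⟨⟨σ, τ⟩, hσ, hτ, rfl⟩ := p
    rw [mul_assoc τ σ σ, hσ, mul_one, hτ]⟩⟩
  invFun s := ⟨(s.1, g * s.1), s.2.1, (isInvolutiveReverser_iff.1 s.2).2,
    by rw [mul_assoc, s.2.1, mul_one]⟩
  left_inv p := by
    obtain ⟨⟨σ, τ⟩, hσ, -, rfl⟩ := p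
    exact Subtype.ext (Prod.ext rfl (show τ * σ * σ = τ by rw [mul_assoc, hσ, mul_one]))
  right_inv _ := rfl

end Group

section Perm

variable {α : Type*} {π : Perm α}

theorem Equiv.Perm.IsCycleOn.eq_of_semiconjBy_of_apply_eq (hπ : π.IsCycleOn .univ)
    {π' s t : Perm α} (hs : SemiconjBy s π π') (ht : SemiconjBy t π π') {a : α}
    (h : s a = t a) : s = t := by
  ext x
  obtain ⟨k, rfl⟩ := hπ.2 (Set.mem_univ a) (Set.mem_univ x)
  rw [← mul_apply, ← mul_apply, (hs.zpow_right k).eq, (ht.zpow_right k).eq, mul_apply, mul_apply,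
    h]

theorem Equiv.Perm.IsCycleOn.exists_isInvolutiveReverser_apply_eq [Finite α]
    (hπ : π.IsCycleOn .univ) (a : α) : ∃ ρ, IsInvolutiveReverser π ρ ∧ ρ a = a := by
  classical
  have := Fintype.ofFinite α
  obtain ⟨c, hc⟩ : IsConj π π⁻¹ := isConj_iff_cycleType_eq.2 (cycleType_inv π).symm
  obtain ⟨j, hj⟩ := hπ.2 (Set.mem_univ ((c : Perm α) a)) (Set.mem_univ a)
  set ρ := π ^ j * (c : Perm α)
  have hρa : ρ a = a := hj
  have hρ : SemiconjBy ρ π π⁻¹ := SemiconjBy.mul_left ((Commute.refl π).inv_right.zpow_left j) hc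
  -- `ρ * ρ` commutes with `π` and fixes `a`, so it is trivial.
  have hρρ : SemiconjBy (ρ * ρ) π π := by
    simpa only [inv_inv] using hρ.inv_right.mul_left hρ
  refine ⟨ρ, ⟨?_, hρ⟩, hρa⟩
  exact hπ.eq_of_semiconjBy_of_apply_eq hρρ (SemiconjBy.one_left π)
    (by rw [mul_apply, hρa, hρa, one_apply])

theorem Equiv.Perm.IsCycleOn.bijective_involutiveReverser_apply [Finite α]
    (hπ : π.IsCycleOn .univ) (a : α) :
    Function.Bijective fun s : {s // IsInvolutiveReverser π s} => s.1 a := by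
  refine ⟨fun s t h => Subtype.ext (hπ.eq_of_semiconjBy_of_apply_eq s.2.2 t.2.2 h), fun b => ?_⟩
  obtain ⟨ρ, hρ, hρa⟩ := hπ.exists_isInvolutiveReverser_apply_eq a
  obtain ⟨k, rfl⟩ := hπ.2 (Set.mem_univ a) (Set.mem_univ b)
  exact ⟨⟨π ^ k * ρ, hρ.zpow_mul k⟩, congrArg (π ^ k) hρa⟩

end Perm

/-- The number of factorizations of an `n`-cycle into two involutions is `n`. -/
theorem cycle_factorizations_into_involutions (n : ℕ) (hn : 1 ≤ n)
    (π : Equiv.Perm (Fin n)) (hπ : π.IsCycleOn (Set.univ : Set (Fin n))) :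
    Nat.card {p : Equiv.Perm (Fin n) × Equiv.Perm (Fin n) //
      p.1 * p.1 = 1 ∧ p.2 * p.2 = 1 ∧ π = p.2 * p.1} = n := by
  have hbij := hπ.bijective_involutiveReverser_apply ⟨0, hn⟩
  rw [Nat.card_congr ((involutionFactorizationsEquiv π).trans (Equiv.ofBijective _ hbij)),
    Nat.card_fin]
end

section
/- Let π be a permutation of a set of size 2n consisting of exactly two disjoint n-cycles. The number of factorizations π = τ ∘ σ into involutions σ, τ such that the union of the matchings of σ and τ forms a single connected graph (a 2n-cycle) is exactly n. -/
/-!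
A factorization `π = τ * σ` into involutions is the same as an involution `σ` that conjugates
`π` to `π⁻¹` (then `τ = π * σ`). Such a `σ` maps `π`-cycles onto `π`-cycles, reversing them:
`σ (π ^ i x) = π ^ (-i) (σ x)`. If `σ` preserves the cycle of `a`, then so does `τ`, and the
superposition graph is disconnected. If instead `σ a` lies in the cycle of `b`, then the path
`x — σ x — τ (σ x) = π x` joins every point to its image under `π`, and the edge `a — σ a` joins
the two cycles. Such a `σ` is determined by `σ a`, and since both cycles have the same length,
every `z` in the cycle of `b` occurs: `π ^ i a ↦ π ^ (-i) z`, `π ^ i z ↦ π ^ (-i) a` is a well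
defined involution. So there are exactly as many factorizations as points in the cycle of `b`.
-/

open Equiv

/-- The superposition graph of two involutions: `x` and `y` are adjacent if one of the
involutions matches them. -/
def superGraph {α : Type*} (σ τ : Equiv.Perm α) : SimpleGraph α :=
  SimpleGraph.fromRel (fun x y => σ x = y ∨ τ x = y)

open Function MulAction

theorem Function.FactorsThrough.exists_involutive_semiconj {ι α : Type*} {f : ι → α}
    {s : ι → ι} (h : (f ∘ s).FactorsThrough f) (hs : Involutive s) :
    ∃ g : α → α, Involutive g ∧ Semiconj f s g := by
  have hext : ∀ i, extend f (f ∘ s) id (f i) = f (s i) := h.extend_apply id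
  refine ⟨extend f (f ∘ s) id, fun x => ?_, fun i => (hext i).symm⟩
  by_cases hx : ∃ i, f i = x
  · obtain ⟨i, rfl⟩ := hx
    rw [hext, hext, hs]
  · rw [extend_apply' _ _ _ hx, id, extend_apply' _ _ _ hx, id]

section Group

variable {G : Type*} [Group G] {σ τ π : G}

theorem semiconjBy_mul_inv_of_mul_self_eq_one (hσ : σ * σ = 1) (hτ : τ * τ = 1) :
    SemiconjBy σ (τ * σ) (τ * σ)⁻¹ := by
  rw [SemiconjBy, mul_inv_rev, inv_eq_of_mul_eq_one_left hσ, inv_eq_of_mul_eq_one_left hτ,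
    mul_assoc]

theorem SemiconjBy.mul_self_mul_eq_one (h : SemiconjBy σ π π⁻¹) (hσ : σ * σ = 1) :
    π * σ * (π * σ) = 1 := by
  rw [mul_assoc, ← mul_assoc σ, h.eq, mul_assoc, hσ, mul_one, mul_inv_cancel]

end Group

namespace Equiv.Perm

variable {α : Type*} {π σ : Perm α} {x y : α}

theorem zpow_apply_eq_zpow_apply_iff {i j : ℤ} :
    (π ^ i) x = (π ^ j) x ↔ (period π x : ℤ) ∣ i - j := by
  rw [← zpow_smul_eq_iff_period_dvd, Perm.smul_def, sub_eq_neg_add, zpow_add, zpow_neg,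
    mul_apply, inv_eq_iff_eq]

theorem SameCycle.period_eq (h : π.SameCycle x y) : period π x = period π y := by
  obtain ⟨k, rfl⟩ := h
  have key : ∀ m : ℤ, (period π x : ℤ) ∣ m ↔ (period π ((π ^ k) x) : ℤ) ∣ m := fun m => by
    rw [← zpow_smul_eq_iff_period_dvd, ← zpow_smul_eq_iff_period_dvd, Perm.smul_def,
      Perm.smul_def, ← mul_apply, ← zpow_add, add_comm, zpow_add, mul_apply,
      (π ^ k).injective.eq_iff]
  exact Int.natCast_inj.mp (Int.dvd_antisymm (by positivity) (by positivity)
    ((key _).mpr dvd_rfl) ((key _).mp dvd_rfl))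

theorem period_eq_ncard_sameCycle [Finite α] (π : Perm α) (x : α) :
    period π x = {y | π.SameCycle x y}.ncard := by
  have horbit : orbit (Subgroup.zpowers π) x = {y | π.SameCycle x y} := by
    ext y
    simp [mem_orbit_iff, SameCycle, Subgroup.smul_def]
  have := Fintype.ofFinite (orbit (Subgroup.zpowers π) x)
  rw [period_eq_minimalPeriod, minimalPeriod_eq_card, ← Nat.card_eq_fintype_card, horbit,
    Nat.card_coe_set_eq]

theorem apply_apply_of_mul_self_eq_one (hσ : σ * σ = 1) (x : α) : σ (σ x) = x := by
  rw [← mul_apply, hσ, one_apply]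

theorem zpow_add_one_apply (π : Perm α) (i : ℤ) (x : α) : (π ^ (i + 1)) x = π ((π ^ i) x) := by
  rw [add_comm, zpow_one_add, mul_apply]

theorem _root_.SemiconjBy.perm_apply_zpow_apply (h : SemiconjBy σ π π⁻¹) (i : ℤ) (x : α) :
    σ ((π ^ i) x) = (π ^ (-i)) (σ x) := by
  rw [← mul_apply, (h.zpow_right i).eq, inv_zpow', mul_apply]

theorem _root_.SemiconjBy.sameCycle_apply_iff (h : SemiconjBy σ π π⁻¹) (hσ : σ * σ = 1) :
    π.SameCycle (σ x) (σ y) ↔ π.SameCycle x y := by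
  have hmap : ∀ {x y}, π.SameCycle x y → π.SameCycle (σ x) (σ y) := by
    rintro x _ ⟨i, rfl⟩
    exact ⟨-i, (h.perm_apply_zpow_apply i x).symm⟩
  refine ⟨fun hσxy => ?_, hmap⟩
  simpa only [apply_apply_of_mul_self_eq_one hσ] using hmap hσxy

end Equiv.Perm

section SuperGraph

variable {α : Type*} {σ τ : Perm α}

theorem superGraph_reachable_left (x : α) : (superGraph σ τ).Reachable x (σ x) := by
  by_cases hx : x = σ x
  · rw [← hx]
  · exact SimpleGraph.Adj.reachable (by simp [superGraph, hx])

theorem superGraph_reachable_right (x : α) : (superGraph σ τ).Reachable x (τ x) := by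
  by_cases hx : x = τ x
  · rw [← hx]
  · exact SimpleGraph.Adj.reachable (by simp [superGraph, hx])

theorem superGraph_reachable_mul_apply (x : α) : (superGraph σ τ).Reachable x ((τ * σ) x) :=
  (superGraph_reachable_left x).trans (superGraph_reachable_right _)

theorem SimpleGraph.Reachable.of_sameCycle {G : SimpleGraph α} {π : Perm α}
    (h : ∀ x, G.Reachable x (π x)) {x y : α} (hxy : π.SameCycle x y) : G.Reachable x y := by
  obtain ⟨i, rfl⟩ := hxy
  induction i using Int.induction_on with
  | zero => rfl
  | succ k ih => exact ih.trans (by simpa only [Perm.zpow_add_one_apply] using h _)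
  | pred k ih =>
    refine ih.trans (SimpleGraph.Reachable.symm ?_)
    have hstep := h ((π ^ (-(k : ℤ) - 1)) x)
    rwa [← Perm.zpow_add_one_apply, sub_add_cancel] at hstep

theorem superGraph_reachable_iff_of_invariant {P : α → Prop} (hσ : ∀ x, P (σ x) ↔ P x)
    (hτ : ∀ x, P (τ x) ↔ P x) {x y : α} (h : (superGraph σ τ).Reachable x y) : P x ↔ P y := by
  obtain ⟨w⟩ := h
  induction w with
  | nil => rfl
  | cons hadj _ ih =>
    refine Iff.trans ?_ ih
    obtain ⟨-, (rfl | rfl) | (rfl | rfl)⟩ := hadj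
    exacts [(hσ _).symm, (hτ _).symm, hσ _, hτ _]

end SuperGraph

namespace Equiv.Perm

variable {α : Type*} {π σ τ : Perm α} {a b : α}

theorem superGraph_connected_iff (hab : ¬π.SameCycle a b)
    (hcover : ∀ z, π.SameCycle a z ∨ π.SameCycle b z)
    (hσ : σ * σ = 1) (hτ : τ * τ = 1) (hπ : π = τ * σ) :
    (superGraph σ τ).Connected ↔ π.SameCycle b (σ a) := by
  constructor
  · intro hconn
    by_contra hbσa
    have haσa : π.SameCycle a (σ a) := (hcover _).resolve_right hbσa
    have hrev : SemiconjBy σ π π⁻¹ := hπ ▸ semiconjBy_mul_inv_of_mul_self_eq_one hσ hτ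
    have hσinv : ∀ x, π.SameCycle a (σ x) ↔ π.SameCycle a x := fun x =>
      (Iff.intro haσa.symm.trans haσa.trans).trans (hrev.sameCycle_apply_iff hσ)
    have hτσ : τ = π * σ := by rw [hπ, mul_assoc, hσ, mul_one]
    have hτinv : ∀ x, π.SameCycle a (τ x) ↔ π.SameCycle a x := fun x => by
      rw [hτσ, mul_apply, sameCycle_apply_right, hσinv]
    exact hab ((superGraph_reachable_iff_of_invariant hσinv hτinv
      (hconn.preconnected a b)).mp SameCycle.rfl)
  · intro hbσa
    have hstep : ∀ x, (superGraph σ τ).Reachable x (π x) := hπ ▸ superGraph_reachable_mul_apply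
    refine (SimpleGraph.connected_iff_exists_forall_reachable _).2 ⟨a, fun x => ?_⟩
    rcases hcover x with hx | hx
    · exact .of_sameCycle hstep hx
    · exact (superGraph_reachable_left a).trans (.of_sameCycle hstep (hbσa.symm.trans hx))

theorem eq_of_semiconjBy_inv_of_apply_eq {σ' : Perm α}
    (hcover : ∀ z, π.SameCycle a z ∨ π.SameCycle b z) (hσ : σ * σ = 1) (hσ' : σ' * σ' = 1)
    (hrev : SemiconjBy σ π π⁻¹) (hrev' : SemiconjBy σ' π π⁻¹) (hbσa : π.SameCycle b (σ a))
    (heq : σ a = σ' a) : σ = σ' := by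
  ext x
  rcases hcover x with ⟨i, rfl⟩ | hx
  · rw [hrev.perm_apply_zpow_apply, hrev'.perm_apply_zpow_apply, heq]
  · obtain ⟨i, rfl⟩ := hbσa.symm.trans hx
    rw [hrev.perm_apply_zpow_apply, apply_apply_of_mul_self_eq_one hσ, heq,
      hrev'.perm_apply_zpow_apply, apply_apply_of_mul_self_eq_one hσ']

theorem exists_mul_self_eq_one_semiconjBy_inv_apply_eq (hab : ¬π.SameCycle a b)
    (hcover : ∀ z, π.SameCycle a z ∨ π.SameCycle b z) (hper : period π a = period π b)
    {z : α} (hz : π.SameCycle b z) :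
    ∃ σ : Perm α, σ * σ = 1 ∧ SemiconjBy σ π π⁻¹ ∧ σ a = z := by
  -- `f` parametrises both cycles; `σ` is induced by the reflection `s` of the parameters, which
  -- is compatible with `f` because the two cycles have the same period.
  set f : ℤ ⊕ ℤ → α := Sum.elim (fun i => (π ^ i) a) (fun i => (π ^ i) z)
  set s : ℤ ⊕ ℤ → ℤ ⊕ ℤ := Sum.elim (fun i => .inr (-i)) (fun i => .inl (-i))
  set shift : ℤ ⊕ ℤ → ℤ ⊕ ℤ := Sum.map (· + 1) (· + 1)
  have hs : Involutive s := by rintro (i | i) <;> simp [s]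
  have hper' : period π a = period π z := hper.trans hz.period_eq
  have haz : ¬π.SameCycle a z := fun h => hab (h.trans hz.symm)
  have hf : (f ∘ s).FactorsThrough f := by
    rintro (i | i) (j | j) hij <;>
      simp only [f, s, comp_apply, Sum.elim_inl, Sum.elim_inr] at hij ⊢
    · rw [zpow_apply_eq_zpow_apply_iff] at hij ⊢
      rwa [← hper', neg_sub_neg, dvd_sub_comm]
    · exact absurd (sameCycle_zpow_left.mp (sameCycle_zpow_right.mp (hij.sameCycle π))) haz
    · exact absurd (sameCycle_zpow_left.mp (sameCycle_zpow_right.mp (hij.sameCycle π))).symm haz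
    · rw [zpow_apply_eq_zpow_apply_iff] at hij ⊢
      rwa [hper', neg_sub_neg, dvd_sub_comm]
  have hf_surj : Surjective f := fun x => by
    rcases hcover x with ⟨i, rfl⟩ | hx
    · exact ⟨.inl i, rfl⟩
    · obtain ⟨i, rfl⟩ := hz.symm.trans hx
      exact ⟨.inr i, rfl⟩
  have hshift : ∀ p, π (f p) = f (shift p) := by
    rintro (i | i) <;> simp [f, shift, zpow_add_one_apply]
  have hshift_s : ∀ p, π (f (s (shift p))) = f (s p) := by
    rintro (i | i) <;> simp [f, s, shift, ← zpow_add_one_apply]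
  obtain ⟨g, hg, hgf⟩ := hf.exists_involutive_semiconj hs
  refine ⟨hg.toPerm, Perm.ext fun x => hg x, ?_, ?_⟩
  · refine Perm.ext fun x => ?_
    obtain ⟨p, rfl⟩ := hf_surj x
    simp only [mul_apply, Involutive.coe_toPerm, eq_inv_iff_eq]
    rw [hshift, ← hgf, ← hgf, hshift_s]
  · simpa [f, s] using (hgf (.inl 0)).symm

theorem card_connected_involution_factorizations (hab : ¬π.SameCycle a b)
    (hcover : ∀ z, π.SameCycle a z ∨ π.SameCycle b z) (hper : period π a = period π b) :
    Nat.card {p : Perm α × Perm α //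
      p.1 * p.1 = 1 ∧ p.2 * p.2 = 1 ∧ π = p.2 * p.1 ∧ (superGraph p.1 p.2).Connected} =
      Nat.card {z // π.SameCycle b z} := by
  refine Nat.card_eq_of_bijective (fun p => ⟨p.1.1 a,
    (superGraph_connected_iff hab hcover p.2.1 p.2.2.1 p.2.2.2.1).mp p.2.2.2.2⟩) ⟨?_, ?_⟩
  · rintro ⟨⟨σ, τ⟩, hσ, hτ, hπ, hconn⟩ ⟨⟨σ', τ'⟩, hσ', hτ', hπ', _⟩ hσa
    have hσσ' : σ = σ' := eq_of_semiconjBy_inv_of_apply_eq hcover hσ hσ'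
      (hπ ▸ semiconjBy_mul_inv_of_mul_self_eq_one hσ hτ)
      (hπ' ▸ semiconjBy_mul_inv_of_mul_self_eq_one hσ' hτ')
      ((superGraph_connected_iff hab hcover hσ hτ hπ).mp hconn) (congrArg Subtype.val hσa)
    subst hσσ'
    obtain rfl : τ = τ' := mul_right_cancel (hπ.symm.trans hπ')
    rfl
  · rintro ⟨z, hz⟩
    obtain ⟨σ, hσ, hrev, rfl⟩ := exists_mul_self_eq_one_semiconjBy_inv_apply_eq hab hcover hper hz
    have hτ := hrev.mul_self_mul_eq_one hσ
    have hπ : π = π * σ * σ := by rw [mul_assoc, hσ, mul_one]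
    exact ⟨⟨(σ, π * σ), hσ, hτ, hπ, (superGraph_connected_iff hab hcover hσ hτ hπ).mpr hz⟩, rfl⟩

end Equiv.Perm

open Equiv.Perm in
theorem two_cycle_factorizations_with_connected_superposition_general (n : ℕ)
    (π : Equiv.Perm (Fin (2 * n))) (a b : Fin (2 * n))
    (hab : ¬ π.SameCycle a b)
    (hcover : ∀ z, π.SameCycle a z ∨ π.SameCycle b z)
    (ha : Set.ncard {z | π.SameCycle a z} = n)
    (hb : Set.ncard {z | π.SameCycle b z} = n) :
    Nat.card {p : Equiv.Perm (Fin (2 * n)) × Equiv.Perm (Fin (2 * n)) //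
      p.1 * p.1 = 1 ∧ p.2 * p.2 = 1 ∧ π = p.2 * p.1 ∧
      (superGraph p.1 p.2).Connected} = n := by
  have hper : period π a = period π b := by
    rw [period_eq_ncard_sameCycle, period_eq_ncard_sameCycle, ha, hb]
  rw [card_connected_involution_factorizations hab hcover hper]
  exact (Nat.card_coe_set_eq _).trans hb

/-- If `π` is a permutation of a `2n`-element set consisting of exactly two disjoint
`n`-cycles, then the number of factorizations `π = τ ∘ σ` into involutions `σ, τ` whose
superposition graph is a single connected `2n`-cycle is exactly `n`. -/
theorem two_cycle_factorizations_with_connected_superposition (n : ℕ) (hn : 1 ≤ n)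
    (π : Equiv.Perm (Fin (2 * n))) (a b : Fin (2 * n))
    (hab : ¬ π.SameCycle a b)
    (hcover : ∀ z, π.SameCycle a z ∨ π.SameCycle b z)
    (ha : Set.ncard {z | π.SameCycle a z} = n)
    (hb : Set.ncard {z | π.SameCycle b z} = n) :
    Nat.card {p : Equiv.Perm (Fin (2 * n)) × Equiv.Perm (Fin (2 * n)) //
      p.1 * p.1 = 1 ∧ p.2 * p.2 = 1 ∧ π = p.2 * p.1 ∧
      (superGraph p.1 p.2).Connected} = n :=
  two_cycle_factorizations_with_connected_superposition_general n π a b hab hcover ha hb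
end

section
/- If a permutation π of [n] has an odd number of cycles of some length k, then π admits no factorization π = τ ∘ σ with σ and τ both fixed-point-free involutions. -/
open Equiv

/-- The number of cycles of length `k` of a permutation of `Fin n`,
counting fixed points as cycles of length 1. -/
def cycleCount {n : ℕ} (π : Equiv.Perm (Fin n)) (k : ℕ) : ℕ :=
  if k = 1 then (Finset.univ.filter fun x => π x = x).card
  else Multiset.count k π.cycleType

/-!
Write `π = τ * σ`. Then `σ` conjugates `π` to `π⁻¹`, so `σ` permutes the fixed points of `π`
without fixed points, and `c ↦ σ * c⁻¹ * σ⁻¹` is an involution on the cycles of `π` preserving their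
length. A cycle `c` fixed by it is reversed by `σ`, so `σ` acts on it as a reflection: either `σ`
fixes a point of `c`, or `σ y = c y` for some `y`, and then `τ = π * σ⁻¹` fixes `c y`. As `σ` and
`τ` have no fixed points, these two involutions have none either, so they pair off the fixed points
of `π` and the cycles of `π` of each length.
-/

open Finset

theorem Finset.even_card_of_involution {α : Type*} {s : Finset α} (f : α → α)
    (hmem : ∀ a ∈ s, f a ∈ s) (hinv : ∀ a ∈ s, f (f a) = a) (hne : ∀ a ∈ s, f a ≠ a) :
    Even #s := by
  rw [← ZMod.natCast_eq_zero_iff_even, card_eq_sum_ones, Nat.cast_sum, Nat.cast_one]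
  exact sum_involution (fun a _ => f a) (fun _ _ => by decide) (fun a ha _ => hne a ha) hmem hinv

theorem mul_conj_eq_inv {G : Type*} [Group G] {s t : G} (hs : s * s = 1) (ht : t * t = 1) :
    s * (t * s) * s⁻¹ = (t * s)⁻¹ := by
  rw [inv_eq_of_mul_eq_one_right hs, mul_inv_rev, inv_eq_of_mul_eq_one_right hs,
    inv_eq_of_mul_eq_one_right ht, mul_assoc, mul_assoc, hs, mul_one]

namespace Equiv.Perm

variable {α : Type*}

/- If `σ x = c ^ a x`, then `σ` acts on the cycle of `x` as the reflection
`c ^ i x ↦ c ^ (a - i) x`, which fixes `c ^ b x` if `a = 2 * b` and sends `c ^ b x` to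
`c ^ (b + 1) x` if `a = 2 * b + 1`. -/
theorem exists_apply_eq_self_or_apply_eq_of_conj_eq_inv {σ c : Perm α}
    (hσ : σ * c * σ⁻¹ = c⁻¹) {x : α} (hx : c.SameCycle x (σ x)) :
    ∃ y, c.SameCycle x y ∧ (σ y = y ∨ σ y = c y) := by
  obtain ⟨a, ha⟩ := hx
  have hpow : ∀ (i : ℤ) (z : α), σ ((c ^ i) z) = (c ^ (-i)) (σ z) := by
    intro i z
    have h : σ * c ^ i * σ⁻¹ = c ^ (-i) := by rw [← conj_zpow, hσ, inv_zpow']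
    simp [← h]
  obtain ⟨b, rfl | rfl⟩ := Int.even_or_odd' a
  · refine ⟨(c ^ b) x, ⟨b, rfl⟩, Or.inl ?_⟩
    rw [hpow, ← ha, ← mul_apply, ← zpow_add]
    congr 2
    ring
  · refine ⟨(c ^ b) x, ⟨b, rfl⟩, Or.inr ?_⟩
    rw [hpow, ← ha, ← mul_apply, ← mul_apply, ← zpow_add, ← zpow_one_add]
    congr 2
    ring

variable [Fintype α] [DecidableEq α]

theorem inv_mem_cycleFactorsFinset_inv {f c : Perm α} (hc : c ∈ f.cycleFactorsFinset) :
    c⁻¹ ∈ f⁻¹.cycleFactorsFinset := by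
  rw [mem_cycleFactorsFinset_iff] at hc ⊢
  refine ⟨hc.1.inv, fun a ha => ?_⟩
  have hb : c⁻¹ a ∈ c.support := support_inv c ▸ apply_mem_support.2 ha
  rw [eq_inv_iff_eq, ← hc.2 _ hb, coe_inv, apply_symm_apply]

theorem conj_inv_mem_cycleFactorsFinset {π σ c : Perm α} (hσ : σ * π * σ⁻¹ = π⁻¹)
    (hc : c ∈ π.cycleFactorsFinset) : σ * c⁻¹ * σ⁻¹ ∈ π.cycleFactorsFinset := by
  have hπ : σ * π⁻¹ * σ⁻¹ = π := by
    calc σ * π⁻¹ * σ⁻¹ = (σ * π * σ⁻¹)⁻¹ := by group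
      _ = π := by rw [hσ, inv_inv]
  simpa only [hπ] using
    (mem_cycleFactorsFinset_conj π⁻¹ σ c⁻¹).2 (inv_mem_cycleFactorsFinset_inv hc)

theorem exists_fixedPoint_of_conj_eq_inv_of_mem_cycleFactorsFinset {σ τ c : Perm α}
    (hc : c ∈ (τ * σ).cycleFactorsFinset) (hσc : σ * c * σ⁻¹ = c⁻¹) :
    ∃ y, σ y = y ∨ τ y = y := by
  rw [mem_cycleFactorsFinset_iff] at hc
  obtain ⟨x, hx⟩ := hc.1.nonempty_support
  have hσx : σ x ∈ c.support := by
    rw [← support_inv, ← hσc, support_conj]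
    exact mem_map_of_mem _ hx
  obtain ⟨y, hxy, hy | hy⟩ := exists_apply_eq_self_or_apply_eq_of_conj_eq_inv hσc
    (hc.1.sameCycle (mem_support.1 hx) (mem_support.1 hσx))
  · exact ⟨y, Or.inl hy⟩
  · refine ⟨c y, Or.inr ?_⟩
    calc τ (c y) = (τ * σ) y := by rw [mul_apply, hy]
      _ = c y := (hc.2 y (hxy.mem_support_iff.1 hx)).symm

theorem even_card_fixedPoints_of_conj_eq_inv {π σ : Perm α} (hσ : σ * π * σ⁻¹ = π⁻¹)
    (hσ2 : σ * σ = 1) (hσf : ∀ x, σ x ≠ x) : Even #{x | π x = x} := by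
  refine even_card_of_involution σ (fun x hx => ?_)
    (fun x _ => by rw [← mul_apply, hσ2, one_apply]) (fun x _ => hσf x)
  simp only [mem_filter, mem_univ, true_and] at hx ⊢
  have h := congr($hσ (σ x))
  rw [mul_apply, mul_apply, coe_inv, symm_apply_apply, hx] at h
  exact eq_inv_iff_eq.1 h

theorem even_count_cycleType_of_conj_eq_inv {π σ : Perm α} (hσ : σ * π * σ⁻¹ = π⁻¹)
    (hσ2 : σ * σ = 1) (hfix : ∀ c ∈ π.cycleFactorsFinset, σ * c * σ⁻¹ ≠ c⁻¹) (k : ℕ) :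
    Even (π.cycleType.count k) := by
  have hcount : π.cycleType.count k = #{c ∈ π.cycleFactorsFinset | k = #c.support} := by
    rw [cycleType_def, Multiset.count_map]
    rfl
  have hσinv : σ⁻¹ = σ := inv_eq_of_mul_eq_one_right hσ2
  rw [hcount]
  refine even_card_of_involution (fun c => σ * c⁻¹ * σ⁻¹) (fun c hc => ?_) (fun c _ => ?_)
    (fun c hc h => hfix c (mem_filter.1 hc).1 ?_)
  · rw [mem_filter] at hc ⊢
    exact ⟨conj_inv_mem_cycleFactorsFinset hσ hc.1, by rw [card_support_conj, support_inv, hc.2]⟩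
  · simp only [hσinv, mul_inv_rev, inv_inv, ← mul_assoc, hσ2, one_mul]
    rw [mul_assoc, hσ2, mul_one]
  · calc σ * c * σ⁻¹ = (σ * c⁻¹ * σ⁻¹)⁻¹ := by group
      _ = c⁻¹ := by rw [h]

end Equiv.Perm

/-- If a permutation `π` of `[n]` has an odd number of cycles of some length `k`, then `π`
admits no factorization into two fixed-point-free involutions. -/
theorem no_fpf_factorization_of_odd_cycle_count (n : ℕ) (π : Equiv.Perm (Fin n)) (k : ℕ)
    (hodd : Odd (cycleCount π k)) :
    ¬ ∃ σ τ : Equiv.Perm (Fin n),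
      (σ * σ = 1 ∧ ∀ i, σ i ≠ i) ∧ (τ * τ = 1 ∧ ∀ i, τ i ≠ i) ∧ π = τ * σ := by
  rintro ⟨σ, τ, ⟨hσ2, hσf⟩, ⟨hτ2, hτf⟩, rfl⟩
  have hrev := mul_conj_eq_inv hσ2 hτ2
  rw [cycleCount] at hodd
  split_ifs at hodd
  · exact Nat.not_even_iff_odd.2 hodd (Perm.even_card_fixedPoints_of_conj_eq_inv hrev hσ2 hσf)
  · refine Nat.not_even_iff_odd.2 hodd
      (Perm.even_count_cycleType_of_conj_eq_inv hrev hσ2 (fun c hc hσc => ?_) k)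
    obtain ⟨y, hy | hy⟩ := Perm.exists_fixedPoint_of_conj_eq_inv_of_mem_cycleFactorsFinset hc hσc
    exacts [hσf y hy, hτf y hy]
end

section
/- For each n ≥ 1, the number of pairs (σ, τ) of fixed-point-free involutions of [2n] such that τ ∘ σ has exactly 2·c_k cycles of length k for each k equals the number of permutations of [2n] with exactly c_k cycles of length 2k for each k and no cycles of odd length. -/
open Equiv

/-!
Let `σ, τ` be fixed-point-free involutions and `ρ = τ σ`. Since `σ ρ σ = ρ⁻¹`, `σ` maps each
`ρ`-cycle `C` onto a `ρ`-cycle `σ C`, and `σ C ≠ C` because `σ` and `τ` have no fixed points.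
Choosing in each such pair the cycle `C` with the smaller minimum, the permutation `π` equal to
`σ` on `C` and to `τ` on `σ C` satisfies `π² = ρ` on `C` and `π² = ρ⁻¹` on `σ C`, so `C ∪ σ C` is
a single `π`-cycle of length `2 |C|`. Conversely, the `π²`-cycles of a permutation `π` with only
even cycles come in pairs `C, π C`, and `σ = π` on the one with the smaller minimum and `π⁻¹` on
the other (`τ` the other way round) recovers the pair. This bijection doubles every cycle length.
-/

open Function Finset

namespace Equiv.Perm

variable {α : Type*}

section Periods

variable [Fintype α] [DecidableEq α]

theorem minimalPeriod_eq_card_support_cycleOf {g : Perm α} {x : α} (hx : g x ≠ x) :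
    minimalPeriod g x = #(g.cycleOf x).support := by
  have hmem : x ∈ (g.cycleOf x).support :=
    mem_support_cycleOf_iff.2 ⟨.refl _ _, mem_support.2 hx⟩
  refine Nat.dvd_right_iff_eq.1 fun n => ?_
  rw [← isPeriodicPt_iff_minimalPeriod_dvd, IsPeriodicPt, IsFixedPt, ← coe_pow,
    (g.isCycleOn_support_cycleOf x).pow_apply_eq hmem]

theorem minimalPeriod_eq_card_sameCycle (g : Perm α) (x : α) :
    minimalPeriod g x = #{y | g.SameCycle x y} := by
  by_cases hx : g x = x
  · rw [minimalPeriod_eq_one_iff_isFixedPt.2 hx, eq_comm, card_eq_one]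
    exact ⟨x, by ext y; simpa using ⟨fun h => (h.eq_of_left hx).symm, fun h => h ▸ .refl _ _⟩⟩
  · rw [minimalPeriod_eq_card_support_cycleOf hx]
    congr 1
    ext y
    simp [mem_support_cycleOf_iff' hx]

theorem minimalPeriod_eq_of_sameCycle_iff {f g : Perm α} {x : α}
    (h : ∀ y, f.SameCycle x y ↔ g.SameCycle x y) : minimalPeriod f x = minimalPeriod g x := by
  simp only [minimalPeriod_eq_card_sameCycle, h]

theorem count_cycleType_mul_eq_card (g : Perm α) {k : ℕ} (hk : 2 ≤ k) :
    g.cycleType.count k * k = #{x | minimalPeriod g x = k} := by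
  set cycles := {c ∈ g.cycleFactorsFinset | #c.support = k}
  have hfilter : ({x | minimalPeriod g x = k} : Finset α) = cycles.biUnion support := by
    ext x
    simp only [mem_filter, mem_univ, true_and, mem_biUnion, cycles]
    constructor
    · intro hxk
      have hx : g x ≠ x := fun h => by
        rw [minimalPeriod_eq_one_iff_isFixedPt.2 h] at hxk; omega
      refine ⟨g.cycleOf x, ⟨cycleOf_mem_cycleFactorsFinset_iff.2 (mem_support.2 hx), ?_⟩,
        mem_support_cycleOf_iff.2 ⟨.refl _ _, mem_support.2 hx⟩⟩
      rwa [← minimalPeriod_eq_card_support_cycleOf hx]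
    · rintro ⟨c, ⟨hc, hck⟩, hxc⟩
      obtain rfl := cycle_is_cycleOf hxc hc
      rwa [minimalPeriod_eq_card_support_cycleOf (mem_support.1 (support_cycleOf_le g x hxc))]
  rw [hfilter, card_biUnion, sum_const_nat fun c hc => (mem_filter.1 hc).2, cycleType_def,
    Multiset.count_map]
  · simp only [card_def, filter_val, Function.comp_apply, eq_comm]
    congr
  · exact fun c hc d hd hcd => (g.cycleFactorsFinset_pairwise_disjoint
      (mem_filter.1 hc).1 (mem_filter.1 hd).1 hcd).disjoint_support

end Periods

theorem SameCycle.of_forall_sameCycle_apply {f g : Perm α} (h : ∀ x, g.SameCycle x (f x))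
    {x y : α} (hxy : f.SameCycle x y) : g.SameCycle x y := by
  obtain ⟨n, rfl⟩ := hxy
  induction n using Int.induction_on with
  | zero => exact .refl _ _
  | succ n ih => rw [add_comm, zpow_add, zpow_one, mul_apply]; exact ih.trans (h _)
  | pred n ih =>
    rw [sub_eq_neg_add, zpow_add, zpow_neg_one, mul_apply]
    exact ih.trans (by simpa using (h (f⁻¹ ((f ^ (-(n : ℤ))) x))).symm)

theorem sameCycle_iff_of_apply_eq_ite (p : α → Prop) [DecidablePred p] {ρ ρ' : Perm α}
    (hp : ∀ x, p (ρ x) ↔ p x) (h : ∀ x, ρ' x = if p x then ρ x else ρ⁻¹ x) {x y : α} :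
    ρ'.SameCycle x y ↔ ρ.SameCycle x y := by
  refine ⟨SameCycle.of_forall_sameCycle_apply fun z => ?_,
    SameCycle.of_forall_sameCycle_apply fun z => ?_⟩
  · rw [h]
    split_ifs
    · exact sameCycle_apply_right.2 .rfl
    · simp [SameCycle.rfl]
  · by_cases hz : p z
    · have : ρ' z = ρ z := by rw [h, if_pos hz]
      exact this ▸ sameCycle_apply_right.2 .rfl
    · have : ρ' (ρ z) = z := by rw [h, if_neg (by rwa [hp])]; simp
      exact SameCycle.symm ⟨1, by simpa using this⟩

section Alternating

variable {p : α → Prop} {π : Perm α}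

theorem apply_pow_iff_of_apply_iff_not (h : ∀ x, p (π x) ↔ ¬ p x) (n : ℕ) (x : α) :
    p ((π ^ n) x) ↔ (p x ↔ Even n) := by
  induction n with
  | zero => simp
  | succ n ih => rw [pow_succ', mul_apply, h, ih, Nat.even_add_one]; tauto

theorem even_minimalPeriod_of_apply_iff_not (h : ∀ x, p (π x) ↔ ¬ p x) (x : α) :
    Even (minimalPeriod π x) := by
  have := apply_pow_iff_of_apply_iff_not h (minimalPeriod π x) x
  rw [coe_pow, iterate_minimalPeriod] at this
  tauto

theorem apply_symm_iff_of_apply_iff_not (h : ∀ x, p (π x) ↔ ¬ p x) (x : α) :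
    p (π.symm x) ↔ ¬ p x := by
  simpa using (h (π.symm x)).symm.not

theorem minimalPeriod_eq_two_mul_minimalPeriod_sq {x : α} (h : Even (minimalPeriod π x)) :
    minimalPeriod π x = 2 * minimalPeriod ⇑(π ^ 2) x := by
  rw [coe_pow, minimalPeriod_iterate_eq_div_gcd two_ne_zero, Nat.gcd_eq_right h.two_dvd,
    Nat.mul_div_cancel' h.two_dvd]

theorem not_sameCycle_sq_apply {x : α} (h : Even (minimalPeriod π x)) :
    ¬ (π ^ 2).SameCycle x (π x) := by
  rintro ⟨i, hi⟩
  have hfix : (π ^ (2 * i - 1)) x = x := by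
    rw [show π ^ (2 * i - 1) = π⁻¹ * (π ^ 2) ^ i by group, mul_apply, hi]
    simp
  have hdvd : (minimalPeriod π x : ℤ) ∣ 2 * i - 1 :=
    (MulAction.zpow_smul_eq_iff_minimalPeriod_dvd (a := π) (b := x)).1 hfix
  obtain ⟨m, hm⟩ := h
  rw [hm, Nat.cast_add] at hdvd
  have := (Dvd.intro (m : ℤ) (two_mul _)).trans hdvd
  omega

end Alternating

section Constructions

variable (p : α → Prop) [DecidablePred p]

def matchingOn (π : Perm α) (h : ∀ x, p (π x) ↔ ¬ p x) : Perm α :=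
  Involutive.toPerm (fun x => if p x then π x else π⁻¹ x) fun x => by
    by_cases hx : p x
    · simp [hx, h]
    · simp [hx, apply_symm_iff_of_apply_iff_not h]

def ofInvolutions (σ τ : Perm α) (hσ : Involutive σ) (hτ : Involutive τ)
    (hpσ : ∀ x, p (σ x) ↔ ¬ p x) (hpτ : ∀ x, p (τ x) ↔ ¬ p x) : Perm α where
  toFun x := if p x then σ x else τ x
  invFun x := if p x then τ x else σ x
  left_inv x := by by_cases hx : p x <;> simp [hx, hpσ, hpτ, hσ x, hτ x]
  right_inv x := by by_cases hx : p x <;> simp [hx, hpσ, hpτ, hσ x, hτ x]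

variable {p}

section MatchingOn

variable {π : Perm α} (h : ∀ x, p (π x) ↔ ¬ p x)

theorem matchingOn_apply (x : α) : matchingOn p π h x = if p x then π x else π⁻¹ x := rfl

theorem matchingOn_apply_iff (x : α) : p (matchingOn p π h x) ↔ ¬ p x := by
  by_cases hx : p x <;> simp [matchingOn_apply, hx, h, apply_symm_iff_of_apply_iff_not h]

theorem matchingOn_compl_mul_matchingOn_apply (x : α) :
    (matchingOn (¬ p ·) π (fun x => (h x).not) * matchingOn p π h) x =
      if p x then (π ^ 2) x else (π ^ 2)⁻¹ x := by
  by_cases hx : p x <;> simp [matchingOn_apply, hx, h, apply_symm_iff_of_apply_iff_not h, sq]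

theorem sameCycle_matchingOn_compl_mul_matchingOn_iff {x y : α} :
    (matchingOn (¬ p ·) π (fun x => (h x).not) * matchingOn p π h).SameCycle x y ↔
      (π ^ 2).SameCycle x y :=
  sameCycle_iff_of_apply_eq_ite p (fun x => by simp [sq, h])
    (matchingOn_compl_mul_matchingOn_apply h)

end MatchingOn

section OfInvolutions

variable {σ τ : Perm α} (hσ : Involutive σ) (hτ : Involutive τ)
  (hpσ : ∀ x, p (σ x) ↔ ¬ p x) (hpτ : ∀ x, p (τ x) ↔ ¬ p x)

theorem ofInvolutions_apply (x : α) :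
    ofInvolutions p σ τ hσ hτ hpσ hpτ x = if p x then σ x else τ x := rfl

theorem ofInvolutions_apply_iff (x : α) : p (ofInvolutions p σ τ hσ hτ hpσ hpτ x) ↔ ¬ p x := by
  by_cases hx : p x <;> simp [ofInvolutions_apply, hx, hpσ, hpτ]

theorem ofInvolutions_sq_apply (x : α) :
    (ofInvolutions p σ τ hσ hτ hpσ hpτ ^ 2) x = if p x then (τ * σ) x else (τ * σ)⁻¹ x := by
  by_cases hx : p x
  · simp [sq, ofInvolutions_apply, hx, hpσ]
  · simp [sq, ofInvolutions_apply, hx, hpτ, Involutive.symm_eq_self_of_involutive _ hσ,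
      Involutive.symm_eq_self_of_involutive _ hτ]

theorem sameCycle_ofInvolutions_sq_iff {x y : α} :
    (ofInvolutions p σ τ hσ hτ hpσ hpτ ^ 2).SameCycle x y ↔ (τ * σ).SameCycle x y :=
  sameCycle_iff_of_apply_eq_ite p (fun x => by simp [hpσ, hpτ])
    (ofInvolutions_sq_apply hσ hτ hpσ hpτ)

theorem minimalPeriod_ofInvolutions [Fintype α] [DecidableEq α] (x : α) :
    minimalPeriod (ofInvolutions p σ τ hσ hτ hpσ hpτ) x = 2 * minimalPeriod (τ * σ) x := by
  rw [minimalPeriod_eq_two_mul_minimalPeriod_sq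
    (even_minimalPeriod_of_apply_iff_not (ofInvolutions_apply_iff hσ hτ hpσ hpτ) x),
    minimalPeriod_eq_of_sameCycle_iff fun y => sameCycle_ofInvolutions_sq_iff hσ hτ hpσ hpτ]

end OfInvolutions

end Constructions

def IsFPFInvolution (σ : Perm α) : Prop := σ * σ = 1 ∧ ∀ x, σ x ≠ x

theorem IsFPFInvolution.involutive {σ : Perm α} (h : IsFPFInvolution σ) : Involutive σ :=
  fun x => by simpa using DFunLike.congr_fun h.1 x

theorem isFPFInvolution_matchingOn {p : α → Prop} [DecidablePred p] {π : Perm α}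
    (h : ∀ x, p (π x) ↔ ¬ p x) : IsFPFInvolution (matchingOn p π h) := by
  refine ⟨Equiv.ext fun x => Involutive.toPerm_involutive _ x, fun x hx => ?_⟩
  have := matchingOn_apply_iff h x
  rw [hx] at this
  tauto

theorem not_sameCycle_mul_apply [Finite α] {σ τ : Perm α} (hσ : IsFPFInvolution σ)
    (hτ : IsFPFInvolution τ) (x : α) : ¬ (τ * σ).SameCycle x (σ x) := by
  intro hx
  obtain ⟨n, hn⟩ := hx.exists_nat_pow_eq
  clear hx
  induction n using Nat.twoStepInduction generalizing x with
  | zero => exact hσ.2 x hn.symm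
  | one => exact hτ.2 (σ x) (by simpa using hn)
  | more n ih _ =>
    -- `σ` conjugates `τ * σ` to its inverse, so the relation descends from `x` to `(τ * σ) x`.
    refine ih ((τ * σ) x) ((τ * σ).injective ?_)
    rw [← mul_apply, ← pow_succ', ← mul_apply, ← pow_succ, hn]
    simp [hσ.involutive _, hτ.involutive _]

section CanonicalHalves

variable [Fintype α] [LinearOrder α]

def cycleMin (ρ : Perm α) (x : α) : α :=
  ({y | ρ.SameCycle x y} : Finset α).min' ⟨x, mem_filter.2 ⟨mem_univ _, .refl _ _⟩⟩

theorem sameCycle_cycleMin (ρ : Perm α) (x : α) : ρ.SameCycle x (cycleMin ρ x) :=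
  (mem_filter.1 (min'_mem _ _)).2

theorem cycleMin_eq_cycleMin_iff {ρ : Perm α} {x y : α} :
    cycleMin ρ x = cycleMin ρ y ↔ ρ.SameCycle x y := by
  refine ⟨fun h => (sameCycle_cycleMin ρ x).trans (h ▸ (sameCycle_cycleMin ρ y).symm),
    fun h => ?_⟩
  unfold cycleMin
  congr 1
  ext z
  simp only [mem_filter, mem_univ, true_and]
  exact ⟨h.symm.trans, h.trans⟩

theorem cycleMin_congr {ρ ρ' : Perm α} (h : ∀ x y, ρ.SameCycle x y ↔ ρ'.SameCycle x y) :
    cycleMin ρ = cycleMin ρ' := by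
  ext1 x
  unfold cycleMin
  congr 1
  ext y
  simp [h]

/-- Picks one cycle out of each pair of `ρ`-cycles exchanged by `f`; this canonical choice is what
makes the correspondence between pairs of involutions and permutations a bijection. -/
def LowerHalf (ρ f : Perm α) (x : α) : Prop := cycleMin ρ x < cycleMin ρ (f x)

instance (ρ f : Perm α) : DecidablePred (LowerHalf ρ f) := fun _ => by
  unfold LowerHalf; infer_instance

theorem lowerHalf_iff_not_of_sameCycle {ρ f : Perm α} {x x' : α} (h₁ : ρ.SameCycle x' (f x))
    (h₂ : ρ.SameCycle (f x') x) (hx : ¬ ρ.SameCycle x (f x)) :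
    LowerHalf ρ f x' ↔ ¬ LowerHalf ρ f x := by
  rw [LowerHalf, LowerHalf, cycleMin_eq_cycleMin_iff.2 h₁, cycleMin_eq_cycleMin_iff.2 h₂, not_lt,
    le_iff_lt_or_eq, or_iff_left (mt cycleMin_eq_cycleMin_iff.1 (hx ·.symm))]

theorem lowerHalf_congr {ρ ρ' f f' : Perm α} {x : α}
    (hρ : ∀ x y, ρ.SameCycle x y ↔ ρ'.SameCycle x y) (hf : ∀ x, ρ'.SameCycle (f x) (f' x)) :
    LowerHalf ρ f x ↔ LowerHalf ρ' f' x := by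
  rw [LowerHalf, LowerHalf, cycleMin_congr hρ, cycleMin_eq_cycleMin_iff.2 (hf x)]

section FPFInvolutions

variable {σ τ : Perm α} (hσ : IsFPFInvolution σ) (hτ : IsFPFInvolution τ)
include hσ hτ

theorem lowerHalf_mul_apply_right_iff (x : α) :
    LowerHalf (τ * σ) σ (σ x) ↔ ¬ LowerHalf (τ * σ) σ x :=
  lowerHalf_iff_not_of_sameCycle .rfl (by rw [hσ.involutive x])
    (not_sameCycle_mul_apply hσ hτ x)

theorem lowerHalf_mul_apply_left_iff (x : α) :
    LowerHalf (τ * σ) σ (τ x) ↔ ¬ LowerHalf (τ * σ) σ x := by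
  refine lowerHalf_iff_not_of_sameCycle ?_ ?_ (not_sameCycle_mul_apply hσ hτ x)
  · exact .symm ⟨1, by simp [hσ.involutive x]⟩
  · exact ⟨1, by simp [hσ.involutive _, hτ.involutive x]⟩

def ofFPFInvolutions : Perm α :=
  ofInvolutions (LowerHalf (τ * σ) σ) σ τ hσ.involutive hτ.involutive
    (lowerHalf_mul_apply_right_iff hσ hτ) (lowerHalf_mul_apply_left_iff hσ hτ)

theorem ofFPFInvolutions_apply (x : α) :
    ofFPFInvolutions hσ hτ x = if LowerHalf (τ * σ) σ x then σ x else τ x := rfl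

theorem ofFPFInvolutions_symm_apply (x : α) :
    (ofFPFInvolutions hσ hτ).symm x = if LowerHalf (τ * σ) σ x then τ x else σ x := rfl

theorem even_minimalPeriod_ofFPFInvolutions (x : α) :
    Even (minimalPeriod (ofFPFInvolutions hσ hτ) x) :=
  even_minimalPeriod_of_apply_iff_not (ofInvolutions_apply_iff _ _ _ _) x

theorem minimalPeriod_ofFPFInvolutions (x : α) :
    minimalPeriod (ofFPFInvolutions hσ hτ) x = 2 * minimalPeriod (τ * σ) x :=
  minimalPeriod_ofInvolutions _ _ _ _ x

theorem lowerHalf_ofFPFInvolutions_sq_iff (x : α) :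
    LowerHalf (ofFPFInvolutions hσ hτ ^ 2) (ofFPFInvolutions hσ hτ) x ↔
      LowerHalf (τ * σ) σ x := by
  refine lowerHalf_congr (fun _ _ => sameCycle_ofInvolutions_sq_iff ..) fun x => ?_
  by_cases hx : LowerHalf (τ * σ) σ x
  · simp [ofFPFInvolutions_apply, hx, SameCycle.rfl]
  · simpa [ofFPFInvolutions_apply, hx] using SameCycle.symm ⟨1, by simp [hσ.involutive x]⟩

end FPFInvolutions

section EvenPeriods

variable {π : Perm α} (h : ∀ x, Even (minimalPeriod π x))
include h

theorem lowerHalf_sq_apply_iff (x : α) :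
    LowerHalf (π ^ 2) π (π x) ↔ ¬ LowerHalf (π ^ 2) π x :=
  lowerHalf_iff_not_of_sameCycle .rfl
    (by rw [← mul_apply, ← sq]; exact sameCycle_apply_left.2 .rfl) (not_sameCycle_sq_apply (h x))

def toFPFInvolutions : Perm α × Perm α :=
  (matchingOn (LowerHalf (π ^ 2) π) π (lowerHalf_sq_apply_iff h),
    matchingOn (¬ LowerHalf (π ^ 2) π ·) π fun x => (lowerHalf_sq_apply_iff h x).not)

theorem isFPFInvolution_toFPFInvolutions_fst : IsFPFInvolution (toFPFInvolutions h).1 :=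
  isFPFInvolution_matchingOn (lowerHalf_sq_apply_iff h)

theorem isFPFInvolution_toFPFInvolutions_snd : IsFPFInvolution (toFPFInvolutions h).2 :=
  isFPFInvolution_matchingOn fun x => (lowerHalf_sq_apply_iff h x).not

theorem toFPFInvolutions_fst_apply (x : α) :
    (toFPFInvolutions h).1 x = if LowerHalf (π ^ 2) π x then π x else π.symm x := rfl

theorem toFPFInvolutions_snd_apply (x : α) :
    (toFPFInvolutions h).2 x = if LowerHalf (π ^ 2) π x then π.symm x else π x := by
  by_cases hx : LowerHalf (π ^ 2) π x <;> simp [toFPFInvolutions, matchingOn_apply, hx]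

theorem lowerHalf_toFPFInvolutions_iff (x : α) :
    LowerHalf ((toFPFInvolutions h).2 * (toFPFInvolutions h).1) (toFPFInvolutions h).1 x ↔
      LowerHalf (π ^ 2) π x := by
  refine lowerHalf_congr
    (fun _ _ => sameCycle_matchingOn_compl_mul_matchingOn_iff (lowerHalf_sq_apply_iff h))
    fun x => ?_
  by_cases hx : LowerHalf (π ^ 2) π x
  · simp [toFPFInvolutions_fst_apply, hx, SameCycle.rfl]
  · simp only [toFPFInvolutions_fst_apply, hx, if_false]
    exact ⟨1, by simp [sq]⟩

theorem ofFPFInvolutions_toFPFInvolutions :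
    ofFPFInvolutions (isFPFInvolution_toFPFInvolutions_fst h)
      (isFPFInvolution_toFPFInvolutions_snd h) = π := by
  ext x
  by_cases hx : LowerHalf (π ^ 2) π x <;>
    simp [ofFPFInvolutions_apply, lowerHalf_toFPFInvolutions_iff, toFPFInvolutions_fst_apply,
      toFPFInvolutions_snd_apply, hx]

end EvenPeriods

theorem toFPFInvolutions_ofFPFInvolutions {σ τ : Perm α} (hσ : IsFPFInvolution σ)
    (hτ : IsFPFInvolution τ) :
    toFPFInvolutions (even_minimalPeriod_ofFPFInvolutions hσ hτ) = (σ, τ) := by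
  ext x <;> by_cases hx : LowerHalf (τ * σ) σ x <;>
    simp [toFPFInvolutions_fst_apply, toFPFInvolutions_snd_apply,
      lowerHalf_ofFPFInvolutions_sq_iff, ofFPFInvolutions_apply, ofFPFInvolutions_symm_apply, hx]

def fpfInvolutionPairsEquiv :
    {q : Perm α × Perm α // IsFPFInvolution q.1 ∧ IsFPFInvolution q.2} ≃
      {π : Perm α // ∀ x, Even (minimalPeriod π x)} where
  toFun q := ⟨ofFPFInvolutions q.2.1 q.2.2, even_minimalPeriod_ofFPFInvolutions q.2.1 q.2.2⟩
  invFun π := ⟨toFPFInvolutions π.2, isFPFInvolution_toFPFInvolutions_fst π.2,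
    isFPFInvolution_toFPFInvolutions_snd π.2⟩
  left_inv q := Subtype.ext (toFPFInvolutions_ofFPFInvolutions q.2.1 q.2.2)
  right_inv π := Subtype.ext (ofFPFInvolutions_toFPFInvolutions π.2)

theorem minimalPeriod_fpfInvolutionPairsEquiv
    (q : {q : Perm α × Perm α // IsFPFInvolution q.1 ∧ IsFPFInvolution q.2}) (x : α) :
    minimalPeriod (fpfInvolutionPairsEquiv q).1 x = 2 * minimalPeriod (q.1.2 * q.1.1) x :=
  minimalPeriod_ofFPFInvolutions q.2.1 q.2.2 x

end CanonicalHalves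

end Equiv.Perm

open Perm

theorem cycleCount_mul_eq_card {m : ℕ} (g : Perm (Fin m)) {k : ℕ} (hk : 1 ≤ k) :
    cycleCount g k * k = #{x | minimalPeriod g x = k} := by
  unfold cycleCount
  split_ifs with h1
  · subst h1
    simp [minimalPeriod_eq_one_iff_isFixedPt, IsFixedPt]
  · exact g.count_cycleType_mul_eq_card (by omega)

theorem forall_odd_cycleCount_eq_zero_iff {m : ℕ} (g : Perm (Fin m)) :
    (∀ k, Odd k → cycleCount g k = 0) ↔ ∀ x, Even (minimalPeriod g x) := by
  have hzero : ∀ k, Odd k → (cycleCount g k = 0 ↔ ∀ x, minimalPeriod g x ≠ k) := fun k hk => by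
    rw [← mul_left_inj' hk.pos.ne', zero_mul, cycleCount_mul_eq_card g hk.pos, card_eq_zero,
      filter_eq_empty_iff]
    simp
  rw [forall₂_congr hzero]
  simp only [← Nat.not_odd_iff_even]
  exact ⟨fun h x hx => h _ hx x rfl, fun h k hk x hx => h x (hx ▸ hk)⟩

theorem two_mul_cycleCount_two_mul {m : ℕ} {g h : Perm (Fin m)}
    (hgh : ∀ x, minimalPeriod g x = 2 * minimalPeriod h x) {k : ℕ} (hk : 1 ≤ k) :
    2 * cycleCount g (2 * k) = cycleCount h k := by
  have key : cycleCount g (2 * k) * (2 * k) = cycleCount h k * k := by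
    rw [cycleCount_mul_eq_card g (by omega), cycleCount_mul_eq_card h hk]
    simp only [hgh, Nat.mul_left_cancel_iff two_pos]
  rw [← Nat.mul_left_inj (by omega : k ≠ 0), ← key]
  ring

theorem fpf_involution_pairs_eq_even_cycle_permutations_general (n : ℕ) (c : ℕ → ℕ) :
    Nat.card {p : Equiv.Perm (Fin (2 * n)) × Equiv.Perm (Fin (2 * n)) //
      (p.1 * p.1 = 1 ∧ ∀ i, p.1 i ≠ i) ∧ (p.2 * p.2 = 1 ∧ ∀ i, p.2 i ≠ i) ∧
      ∀ k, 1 ≤ k → cycleCount (p.2 * p.1) k = 2 * c k} =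
    Nat.card {π : Equiv.Perm (Fin (2 * n)) //
      (∀ k, 1 ≤ k → cycleCount π (2 * k) = c k) ∧
      (∀ k, Odd k → cycleCount π k = 0)} := by
  have hcount (q : {q : Perm (Fin (2 * n)) × Perm (Fin (2 * n)) //
      IsFPFInvolution q.1 ∧ IsFPFInvolution q.2}) :
      (∀ k, 1 ≤ k → cycleCount (q.1.2 * q.1.1) k = 2 * c k) ↔
        ∀ k, 1 ≤ k → cycleCount (fpfInvolutionPairsEquiv q).1 (2 * k) = c k := by
    refine forall₂_congr fun k hk => ?_
    rw [← two_mul_cycleCount_two_mul (minimalPeriod_fpfInvolutionPairsEquiv q) hk]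
    omega
  calc _ = Nat.card {q : {q : Perm (Fin (2 * n)) × Perm (Fin (2 * n)) //
          IsFPFInvolution q.1 ∧ IsFPFInvolution q.2} //
          ∀ k, 1 ≤ k → cycleCount (q.1.2 * q.1.1) k = 2 * c k} :=
        Nat.card_congr ((Equiv.subtypeSubtypeEquivSubtypeInter _ _).trans
          (Equiv.subtypeEquivRight fun _ => and_assoc)).symm
    _ = Nat.card {π : {π : Perm (Fin (2 * n)) // ∀ x, Even (minimalPeriod π x)} //
          ∀ k, 1 ≤ k → cycleCount π.1 (2 * k) = c k} :=
        Nat.card_congr (fpfInvolutionPairsEquiv.subtypeEquiv hcount)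
    _ = _ :=
        Nat.card_congr ((Equiv.subtypeSubtypeEquivSubtypeInter _
          fun π => ∀ k, 1 ≤ k → cycleCount π (2 * k) = c k).trans
          (Equiv.subtypeEquivRight fun π => by rw [forall_odd_cycleCount_eq_zero_iff, and_comm]))

/-- The number of pairs `(σ, τ)` of fixed-point-free involutions of `[2n]` such that `τ ∘ σ`
has exactly `2·c_k` cycles of length `k` for each `k ≥ 1` equals the number of permutations
of `[2n]` with exactly `c_k` cycles of length `2k` for each `k ≥ 1` and no odd cycles. -/
theorem fpf_involution_pairs_eq_even_cycle_permutations (n : ℕ) (hn : 1 ≤ n) (c : ℕ → ℕ) :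
    Nat.card {p : Equiv.Perm (Fin (2 * n)) × Equiv.Perm (Fin (2 * n)) //
      (p.1 * p.1 = 1 ∧ ∀ i, p.1 i ≠ i) ∧ (p.2 * p.2 = 1 ∧ ∀ i, p.2 i ≠ i) ∧
      ∀ k, 1 ≤ k → cycleCount (p.2 * p.1) k = 2 * c k} =
    Nat.card {π : Equiv.Perm (Fin (2 * n)) //
      (∀ k, 1 ≤ k → cycleCount π (2 * k) = c k) ∧
      (∀ k, Odd k → cycleCount π k = 0)} :=
  fpf_involution_pairs_eq_even_cycle_permutations_general n c
end

section
/- The number of permutations of [2n] with all cycle lengths even and exactly j cycles equals ((2n−1)!!)² times the probability that Σ_{k=1}^n X_k = j, where X_1, …, X_n are independent Bernoulli random variables with P(X_k = 1) = 1/(2k−1); equivalently, if a_{n,j} denotes the number of such permutations with exactly j cycles, then Σ_j a_{n,j} t^j = (2n−1)!! · Π_{k=1}^n (2k−2+t). -/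
open Equiv Polynomial

set_option linter.unusedSectionVars false

/-- `a n j` is the number of permutations of `[2n]` all of whose cycles have even length
and which have exactly `j` cycles. -/
noncomputable def evenCyclePermCount (n j : ℕ) : ℕ :=
  Nat.card {π : Equiv.Perm (Fin (2 * n)) //
    (∀ x, π x ≠ x) ∧ (∀ c ∈ π.cycleFactorsFinset, Even c.support.card) ∧
    π.cycleFactorsFinset.card = j}

namespace ECAux

open Equiv.Perm Finset

variable {β : Type*} [DecidableEq β] [Fintype β] {γ : Type*} [DecidableEq γ] [Fintype γ]

/-- All cycles even, fixed-point free, `j` cycles. -/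
def ECond (σ : Perm β) (j : ℕ) : Prop :=
  (∀ z, σ z ≠ z) ∧ (∀ z, Even (σ.cycleOf z).support.card) ∧ σ.cycleFactorsFinset.card = j

/-- Marked permutation: fixed points only possibly at `a`, cycles off `a` even,
cycle of `a` (if any) odd, and cycle bookkeeping. -/
def MCond (σ : Perm β) (a : β) (m : ℕ) : Prop :=
  (∀ z, σ z = z → z = a) ∧ (∀ z, ¬ σ.SameCycle a z → Even (σ.cycleOf z).support.card) ∧
  (σ a ≠ a → ¬ Even (σ.cycleOf a).support.card) ∧
  σ.cycleFactorsFinset.card + (if σ a = a then 1 else 0) = m + 1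

section Surgery

variable {g : Perm β} {x y : β}

theorem sameCycle_fixed {z : β} (hgx : g x = x) (h : g.SameCycle z x) : z = x := by
  exact h.eq_of_right hgx

/-! ### Case B : insertion into an existing cycle -/

theorem B1 (hgx : g x = x) (hxy : x ≠ y) (hgy : g y ≠ y) (z : β) :
    (swap x y * g) z = z ↔ (g z = z ∧ z ≠ x) := by
  rcases eq_or_ne z x with rfl | hzx
  · simp only [mul_apply, hgx, swap_apply_left]
    constructor
    · intro h; exact absurd h.symm hxy
    · rintro ⟨-, h⟩; exact absurd rfl h
  · simp only [mul_apply]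
    constructor
    · intro h
      rcases eq_or_ne (g z) x with hx | hx
      · have : z = x := by
          have := hgx ▸ hx
          exact g.injective (by rw [hx, hgx])
        exact absurd this hzx
      rcases eq_or_ne (g z) y with hy | hy
      · rw [hy, swap_apply_right] at h
        exact absurd h.symm hzx
      · rw [swap_apply_of_ne_of_ne hx hy] at h
        exact ⟨h, hzx⟩
    · rintro ⟨h, -⟩
      have hzy : z ≠ y := fun hz => hgy (hz ▸ h)
      rw [h, swap_apply_of_ne_of_ne hzx hzy]

theorem B3a (hgx : g x = x) (hxy : x ≠ y) (z : β) :
    (swap x y * g).SameCycle z (g z) := by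
  rcases eq_or_ne z x with rfl | hzx
  · rw [hgx]
  rcases eq_or_ne (g z) y with hy | hy
  · refine ⟨2, ?_⟩
    have h1 : (swap x y * g) z = x := by rw [mul_apply, hy, swap_apply_right]
    have h2 : (swap x y * g) x = y := by rw [mul_apply, hgx, swap_apply_left]
    rw [zpow_two, mul_apply, h1, h2, hy]
  · refine ⟨1, ?_⟩
    have hx : g z ≠ x := fun h => hzx (g.injective (h.trans hgx.symm))
    rw [zpow_one, mul_apply, swap_apply_of_ne_of_ne hx hy]

theorem B3b (hgx : g x = x) (hxy : x ≠ y) {u v : β} (h : g.SameCycle u v) :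
    (swap x y * g).SameCycle u v := by
  have main : ∀ k : ℕ, (swap x y * g).SameCycle u ((g ^ k) u) := by
    intro k
    induction k with
    | zero => exact SameCycle.refl _ _
    | succ k ih =>
      have hp : (g ^ (k+1)) u = g ((g ^ k) u) := by
        rw [pow_succ']; rfl
      rw [hp]
      exact ih.trans (B3a hgx hxy _)
  obtain ⟨i, hi, hv⟩ := h.exists_pow_eq'
  rw [← hv]
  exact main i

theorem B3c (hgx : g x = x) (hxy : x ≠ y) {u v : β} (h : (swap x y * g).SameCycle u v)
    (hu : u ≠ x) (hv : v ≠ x) : g.SameCycle u v := by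
  have key : ∀ z, g.SameCycle (if z = x then y else z)
      (if (swap x y * g) z = x then y else (swap x y * g) z) := by
    intro z
    by_cases hzx : z = x
    · rw [hzx]
      have h1 : (swap x y * g) x = y := by rw [mul_apply, hgx, swap_apply_left]
      rw [h1, if_pos rfl, if_neg (Ne.symm hxy)]
    · rw [if_neg hzx]
      by_cases hy : g z = y
      · have h1 : (swap x y * g) z = x := by rw [mul_apply, hy, swap_apply_right]
        rw [h1, if_pos rfl]
        exact ⟨1, by simpa using hy⟩
      · have hx : g z ≠ x := fun hh => hzx (g.injective (hh.trans hgx.symm))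
        have h1 : (swap x y * g) z = g z := by rw [mul_apply, swap_apply_of_ne_of_ne hx hy]
        rw [h1, if_neg hx]
        exact ⟨1, by simp⟩
  have main : ∀ k : ℕ, g.SameCycle (if u = x then y else u)
      (if ((swap x y * g) ^ k) u = x then y else ((swap x y * g) ^ k) u) := by
    intro k
    induction k with
    | zero => exact SameCycle.refl _ _
    | succ k ih =>
      have hp : ((swap x y * g) ^ (k+1)) u = (swap x y * g) (((swap x y * g) ^ k) u) := by
        rw [pow_succ']; rfl
      rw [hp]
      exact ih.trans (key _)
  obtain ⟨i, hi, hiv⟩ := h.exists_pow_eq'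
  have := main i
  rw [hiv, if_neg hu, if_neg hv] at this
  exact this

theorem B3d (hgx : g x = x) (hxy : x ≠ y) (hgy : g y ≠ y) {v : β} :
    (swap x y * g).SameCycle x v ↔ v = x ∨ g.SameCycle y v := by
  have hxy' : (swap x y * g).SameCycle x y :=
    ⟨1, by rw [zpow_one, mul_apply, hgx, swap_apply_left]⟩
  constructor
  · intro h
    rcases eq_or_ne v x with rfl | hvx
    · exact Or.inl rfl
    · exact Or.inr (B3c hgx hxy (hxy'.symm.trans h) (Ne.symm hxy) hvx)
  · rintro (rfl | h)
    · exact SameCycle.refl _ _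
    · exact hxy'.trans (B3b hgx hxy h)

theorem B4 (hgx : g x = x) (hxy : x ≠ y) (hgy : g y ≠ y) {z : β} (hzx : z ≠ x)
    (hz : ¬ g.SameCycle y z) : (swap x y * g).cycleOf z = g.cycleOf z := by
  ext w
  have iff1 : (swap x y * g).SameCycle z w ↔ g.SameCycle z w := by
    constructor
    · intro h
      rcases eq_or_ne w x with rfl | hwx
      · rcases (B3d hgx hxy hgy).mp h.symm with h' | h'
        · exact absurd h' hzx
        · exact absurd h' hz
      · exact B3c hgx hxy h hzx hwx
    · exact B3b hgx hxy
  by_cases hs : g.SameCycle z w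
  · rw [Equiv.Perm.cycleOf_apply, Equiv.Perm.cycleOf_apply, if_pos (iff1.mpr hs), if_pos hs]
    have hwx : w ≠ x := by
      rintro rfl
      exact hzx (sameCycle_fixed hgx hs)
    have h1 : g w ≠ x := fun h => hwx (g.injective (h.trans hgx.symm))
    have h2 : g w ≠ y := by
      intro h
      exact hz ((hs.trans ⟨1, by simpa using h⟩).symm)
    rw [mul_apply, swap_apply_of_ne_of_ne h1 h2]
  · rw [Equiv.Perm.cycleOf_apply, Equiv.Perm.cycleOf_apply,
      if_neg (fun hh => hs (iff1.mp hh)), if_neg hs]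

theorem B5 (hgx : g x = x) (hxy : x ≠ y) (hgy : g y ≠ y) :
    ((swap x y * g).cycleOf y).support = insert x ((g.cycleOf y).support) := by
  have hy' : (swap x y * g) y ≠ y := by
    rw [Ne, B1 hgx hxy hgy]
    rintro ⟨h, -⟩; exact hgy h
  have hxy' : (swap x y * g).SameCycle x y :=
    ⟨1, by rw [zpow_one, mul_apply, hgx, swap_apply_left]⟩
  ext w
  rw [Equiv.Perm.mem_support_cycleOf_iff, Finset.mem_insert, Equiv.Perm.mem_support_cycleOf_iff]
  simp only [Equiv.Perm.mem_support, hy', hgy, and_true, ne_eq, not_false_eq_true]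
  constructor
  · intro h
    rcases eq_or_ne w x with rfl | hwx
    · exact Or.inl rfl
    · exact Or.inr (B3c hgx hxy h (Ne.symm hxy) hwx)
  · rintro (rfl | h)
    · exact hxy'.symm
    · exact B3b hgx hxy h

theorem B5card (hgx : g x = x) (hxy : x ≠ y) (hgy : g y ≠ y) :
    ((swap x y * g).cycleOf y).support.card = (g.cycleOf y).support.card + 1 := by
  rw [B5 hgx hxy hgy, Finset.card_insert_of_notMem]
  intro hmem
  have := Equiv.Perm.support_cycleOf_le g y hmem
  rw [Equiv.Perm.mem_support] at this
  exact this hgx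

theorem B6 (hgx : g x = x) (hxy : x ≠ y) (hgy : g y ≠ y) :
    (swap x y * g).cycleFactorsFinset =
      insert ((swap x y * g).cycleOf y) ((g.cycleFactorsFinset).erase (g.cycleOf y)) := by
  have hy' : (swap x y * g) y ≠ y := by
    rw [Ne, B1 hgx hxy hgy]
    rintro ⟨h, -⟩; exact hgy h
  have hxy' : (swap x y * g).SameCycle x y :=
    ⟨1, by rw [zpow_one, mul_apply, hgx, swap_apply_left]⟩
  ext c
  constructor
  · intro hc
    have hcyc := (Equiv.Perm.mem_cycleFactorsFinset_iff.mp hc).1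
    obtain ⟨z, hz⟩ := hcyc.nonempty_support
    have hzc : c = (swap x y * g).cycleOf z := Equiv.Perm.cycle_is_cycleOf hz hc
    by_cases hs : (swap x y * g).SameCycle y z
    · rw [Finset.mem_insert]
      left
      rw [hzc, hs.cycleOf_eq]
    · have hzx : z ≠ x := by
        rintro rfl
        exact hs hxy'.symm
      have hgz : ¬ g.SameCycle y z := fun hh => hs (B3b hgx hxy hh)
      have hzsupp : z ∈ (swap x y * g).support := by
        have := Equiv.Perm.mem_cycleFactorsFinset_support_le hc hz
        exact this
      have hgzz : g z ≠ z := by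
        rw [Equiv.Perm.mem_support, Ne, B1 hgx hxy hgy] at hzsupp
        intro hh
        exact hzsupp ⟨hh, hzx⟩
      rw [Finset.mem_insert]
      right
      rw [Finset.mem_erase]
      constructor
      · rw [hzc, B4 hgx hxy hgy hzx hgz]
        intro hh
        have hyy : y ∈ (g.cycleOf y).support :=
          Equiv.Perm.mem_support_cycleOf_iff.mpr ⟨SameCycle.refl _ _, Equiv.Perm.mem_support.mpr hgy⟩
        rw [← hh] at hyy
        exact hgz ((Equiv.Perm.mem_support_cycleOf_iff.mp hyy).1.symm)
      · rw [hzc, B4 hgx hxy hgy hzx hgz]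
        exact Equiv.Perm.cycleOf_mem_cycleFactorsFinset_iff.mpr (Equiv.Perm.mem_support.mpr hgzz)
  · intro hc
    rw [Finset.mem_insert] at hc
    rcases hc with rfl | hc
    · exact Equiv.Perm.cycleOf_mem_cycleFactorsFinset_iff.mpr (Equiv.Perm.mem_support.mpr hy')
    · rw [Finset.mem_erase] at hc
      obtain ⟨hne, hc⟩ := hc
      have hcyc := (Equiv.Perm.mem_cycleFactorsFinset_iff.mp hc).1
      obtain ⟨z, hz⟩ := hcyc.nonempty_support
      have hzc : c = g.cycleOf z := Equiv.Perm.cycle_is_cycleOf hz hc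
      have hgz : g z ≠ z := by
        have := Equiv.Perm.mem_cycleFactorsFinset_support_le hc hz
        exact Equiv.Perm.mem_support.mp this
      have hzy : ¬ g.SameCycle y z := by
        intro hh
        exact hne (hzc.trans (hh.cycleOf_eq.symm))
      have hzx : z ≠ x := fun hh => hgz (hh ▸ hgx)
      rw [hzc, ← B4 hgx hxy hgy hzx hzy]
      refine Equiv.Perm.cycleOf_mem_cycleFactorsFinset_iff.mpr (Equiv.Perm.mem_support.mpr ?_)
      rw [Ne, B1 hgx hxy hgy]
      rintro ⟨hh, -⟩
      exact hgz hh

theorem B7 (hgx : g x = x) (hxy : x ≠ y) (hgy : g y ≠ y) :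
    (swap x y * g).cycleFactorsFinset.card = g.cycleFactorsFinset.card := by
  have hymem : g.cycleOf y ∈ g.cycleFactorsFinset :=
    Equiv.Perm.cycleOf_mem_cycleFactorsFinset_iff.mpr (Equiv.Perm.mem_support.mpr hgy)
  rw [B6 hgx hxy hgy, Finset.card_insert_of_notMem, Finset.card_erase_of_mem hymem]
  · have : 0 < g.cycleFactorsFinset.card := Finset.card_pos.mpr ⟨_, hymem⟩
    omega
  · intro hmem
    have hmem' : (swap x y * g).cycleOf y ∈ g.cycleFactorsFinset := Finset.mem_of_mem_erase hmem
    have hsub := Equiv.Perm.mem_cycleFactorsFinset_support_le hmem'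
    have hx : x ∈ ((swap x y * g).cycleOf y).support := by
      rw [B5 hgx hxy hgy]
      exact Finset.mem_insert_self _ _
    have := hsub hx
    rw [Equiv.Perm.mem_support] at this
    exact this hgx

/-! ### Case A : a new 2-cycle -/

theorem Adisj (hgx : g x = x) (hgy : g y = y) : (swap x y).Disjoint g := by
  intro z
  by_cases hzx : z = x
  · right; rw [hzx, hgx]
  by_cases hzy : z = y
  · right; rw [hzy, hgy]
  · left; exact swap_apply_of_ne_of_ne hzx hzy

theorem A1 (hgx : g x = x) (hgy : g y = y) (hxy : x ≠ y) (z : β) :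
    (swap x y * g) z = z ↔ (g z = z ∧ z ≠ x ∧ z ≠ y) := by
  by_cases hzx : z = x
  · subst hzx
    simp only [mul_apply, hgx, swap_apply_left]
    constructor
    · intro h; exact absurd h.symm hxy
    · rintro ⟨-, h, -⟩; exact absurd rfl h
  by_cases hzy : z = y
  · subst hzy
    simp only [mul_apply, hgy, swap_apply_right]
    constructor
    · intro h; exact absurd h hxy
    · rintro ⟨-, -, h⟩; exact absurd rfl h
  · constructor
    · intro h
      refine ⟨?_, hzx, hzy⟩
      rw [mul_apply] at h
      by_cases h1 : g z = x
      · rw [h1, swap_apply_left] at h; exact absurd h.symm hzy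
      by_cases h2 : g z = y
      · rw [h2, swap_apply_right] at h; exact absurd h.symm hzx
      · rwa [swap_apply_of_ne_of_ne h1 h2] at h
    · rintro ⟨h, -, -⟩
      have h1 : g z ≠ x := by rw [h]; exact hzx
      have h2 : g z ≠ y := by rw [h]; exact hzy
      rw [mul_apply, swap_apply_of_ne_of_ne h1 h2, h]

theorem A2 (hgx : g x = x) (hgy : g y = y) (hxy : x ≠ y) :
    (swap x y * g).cycleFactorsFinset = insert (swap x y) g.cycleFactorsFinset := by
  rw [(Adisj hgx hgy).cycleFactorsFinset_mul_eq_union,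
    (isCycle_swap hxy).cycleFactorsFinset_eq_singleton]
  ext c; simp [or_comm]

theorem A2card (hgx : g x = x) (hgy : g y = y) (hxy : x ≠ y) :
    (swap x y * g).cycleFactorsFinset.card = g.cycleFactorsFinset.card + 1 := by
  rw [A2 hgx hgy hxy, Finset.card_insert_of_notMem]
  intro hmem
  have := Equiv.Perm.mem_cycleFactorsFinset_support_le hmem
    (by rw [Equiv.Perm.mem_support, swap_apply_left]; exact Ne.symm hxy :
      x ∈ (swap x y).support)
  rw [Equiv.Perm.mem_support] at this
  exact this hgx

theorem A3 (hgx : g x = x) (hgy : g y = y) (hxy : x ≠ y) {z : β} (hzx : z ≠ x) (hzy : z ≠ y) :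
    (swap x y * g).cycleOf z = g.cycleOf z := by
  rw [(Adisj hgx hgy).cycleOf_mul_distrib]
  have : (swap x y).cycleOf z = 1 := by
    rw [Equiv.Perm.cycleOf_eq_one_iff]
    exact swap_apply_of_ne_of_ne hzx hzy
  rw [this, one_mul]

theorem A4x (hgx : g x = x) (hgy : g y = y) (hxy : x ≠ y) :
    (swap x y * g).cycleOf x = swap x y := by
  rw [(Adisj hgx hgy).cycleOf_mul_distrib]
  have h1 : g.cycleOf x = 1 := (Equiv.Perm.cycleOf_eq_one_iff g).mpr hgx
  have h2 : (swap x y).cycleOf x = swap x y :=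
    (isCycle_swap hxy).cycleOf_eq (by rw [swap_apply_left]; exact Ne.symm hxy)
  rw [h1, h2, mul_one]

theorem A4y (hgx : g x = x) (hgy : g y = y) (hxy : x ≠ y) :
    (swap x y * g).cycleOf y = swap x y := by
  rw [(Adisj hgx hgy).cycleOf_mul_distrib]
  have h1 : g.cycleOf y = 1 := (Equiv.Perm.cycleOf_eq_one_iff g).mpr hgy
  have h2 : (swap x y).cycleOf y = swap x y :=
    (isCycle_swap hxy).cycleOf_eq (by rw [swap_apply_right]; exact hxy)
  rw [h1, h2, mul_one]

end Surgery

section Transport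

variable {p : γ → Prop} [DecidablePred p]

theorem extend_fix_of_not (σ : Perm β) (f : β ≃ Subtype p) {w : γ} (hw : ¬ p w) :
    σ.extendDomain f w = w :=
  Equiv.Perm.extendDomain_apply_not_subtype σ f hw

theorem sameCycle_extend_of_not (σ : Perm β) (f : β ≃ Subtype p) {w w' : γ} (hw : ¬ p w)
    (h : (σ.extendDomain f).SameCycle w w') : w' = w := by
  obtain ⟨i, hi⟩ := h
  rw [Equiv.Perm.zpow_apply_eq_self_of_apply_eq_self (extend_fix_of_not σ f hw)] at hi
  exact hi.symm

theorem mem_support_extend_iff (σ : Perm β) (f : β ≃ Subtype p) (z : β) :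
    ((f z : γ) ∈ (σ.extendDomain f).support) ↔ z ∈ σ.support := by
  rw [Equiv.Perm.mem_support, Equiv.Perm.mem_support]
  rw [Equiv.Perm.extendDomain_apply_image]
  constructor
  · intro h hh; exact h (by rw [hh])
  · intro h hh
    exact h (f.injective (Subtype.coe_injective hh))

theorem support_cycleOf_extend (σ : Perm β) (f : β ≃ Subtype p) (z : β) :
    ((σ.extendDomain f).cycleOf (f z)).support = ((σ.cycleOf z).support).map f.asEmbedding := by
  ext w
  rw [Equiv.Perm.mem_support_cycleOf_iff]
  constructor
  · rintro ⟨hs, hz⟩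
    by_cases hw : p w
    · set v := f.symm ⟨w, hw⟩ with hv
      have hwv : (f v : γ) = w := by rw [hv]; simp
      rw [← hwv] at hs
      rw [sameCycle_extendDomain] at hs
      rw [Finset.mem_map]
      refine ⟨v, ?_, hwv⟩
      rw [Equiv.Perm.mem_support_cycleOf_iff]
      exact ⟨hs, (mem_support_extend_iff σ f z).mp hz⟩
    · exact absurd (sameCycle_extend_of_not σ f hw hs.symm).symm
        (by intro hh; exact hw (hh ▸ (f z).2))
  · intro hw
    rw [Finset.mem_map] at hw
    obtain ⟨v, hv, rfl⟩ := hw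
    rw [Equiv.Perm.mem_support_cycleOf_iff] at hv
    refine ⟨?_, (mem_support_extend_iff σ f z).mpr hv.2⟩
    exact (sameCycle_extendDomain (f := f)).mpr hv.1

theorem card_support_cycleOf_extend (σ : Perm β) (f : β ≃ Subtype p) (z : β) :
    ((σ.extendDomain f).cycleOf (f z)).support.card = (σ.cycleOf z).support.card := by
  rw [support_cycleOf_extend, Finset.card_map]

theorem card_cycleType' (σ : Perm β) :
    Multiset.card σ.cycleType = σ.cycleFactorsFinset.card := by
  rw [Equiv.Perm.cycleType_def, Multiset.card_map]
  rfl

theorem card_factors_extend (σ : Perm β) (f : β ≃ Subtype p) :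
    (σ.extendDomain f).cycleFactorsFinset.card = σ.cycleFactorsFinset.card := by
  rw [← card_cycleType', ← card_cycleType', Equiv.Perm.cycleType_extendDomain]

/-! #### optionCongr as extendDomain -/

def someEquiv (β : Type*) : β ≃ {o : Option β // o.isSome = true} where
  toFun b := ⟨some b, rfl⟩
  invFun o := o.1.get o.2
  left_inv b := rfl
  right_inv := fun ⟨o, h⟩ => by
    cases o with
    | none => exact absurd h (by simp)
    | some b => rfl

theorem optionCongr_eq_extend (σ : Perm β) :
    σ.optionCongr = σ.extendDomain (someEquiv β) := by
  ext o
  cases o with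
  | none =>
    rw [extend_fix_of_not σ (someEquiv β) (by simp)]
    simp
  | some b =>
    have this1 : ((someEquiv β) b : Option β) = some b := rfl
    have h2 := Equiv.Perm.extendDomain_apply_image σ (someEquiv β) b
    rw [this1] at h2
    have l : σ.optionCongr (some b) = some (σ b) := by simp
    rw [l, h2]
    rfl

theorem oc_none (σ : Perm β) : σ.optionCongr none = none := rfl

theorem oc_some (σ : Perm β) (z : β) : σ.optionCongr (some z) = some (σ z) := by simp

theorem oc_fix_iff (σ : Perm β) (z : β) : σ.optionCongr (some z) = some z ↔ σ z = z := by
  rw [oc_some]; simp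

theorem oc_sameCycle (σ : Perm β) (u v : β) :
    Perm.SameCycle σ.optionCongr (some u) (some v) ↔ σ.SameCycle u v := by
  rw [optionCongr_eq_extend]
  exact sameCycle_extendDomain (f := someEquiv β)

theorem oc_sameCycle_none (σ : Perm β) (w : Option β) :
    Perm.SameCycle σ.optionCongr none w ↔ w = none := by
  constructor
  · intro h
    rw [optionCongr_eq_extend] at h
    exact sameCycle_extend_of_not σ (someEquiv β) (by simp) h
  · rintro rfl; exact SameCycle.refl _ _

theorem oc_card_cycleOf (σ : Perm β) (z : β) :
    ((Perm.cycleOf σ.optionCongr (some z)).support).card = (σ.cycleOf z).support.card := by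
  rw [optionCongr_eq_extend]
  exact card_support_cycleOf_extend σ (someEquiv β) z

theorem oc_card_factors (σ : Perm β) :
    (Perm.cycleFactorsFinset σ.optionCongr).card = σ.cycleFactorsFinset.card := by
  rw [optionCongr_eq_extend]
  exact card_factors_extend σ (someEquiv β)

/-! #### permCongr as extendDomain -/

def trueEquiv (e : β ≃ γ) : β ≃ {c : γ // (fun _ => True) c} :=
  e.trans ⟨fun c => ⟨c, trivial⟩, fun s => s.1, fun _ => rfl, fun _ => rfl⟩

theorem permCongr_eq_extend (e : β ≃ γ) (σ : Perm β) :
    e.permCongr σ = σ.extendDomain (trueEquiv e) := by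
  ext c
  have h2 := Equiv.Perm.extendDomain_apply_image σ (trueEquiv e) (e.symm c)
  have h3 : ((trueEquiv e) (e.symm c) : γ) = c := by simp [trueEquiv]
  rw [h3] at h2
  rw [h2]
  simp [trueEquiv]

theorem pc_apply (e : β ≃ γ) (σ : Perm β) (z : β) : e.permCongr σ (e z) = e (σ z) := by
  simp

theorem pc_sameCycle (e : β ≃ γ) (σ : Perm β) (u v : β) :
    (e.permCongr σ).SameCycle (e u) (e v) ↔ σ.SameCycle u v := by
  rw [permCongr_eq_extend]
  have h1 : ((trueEquiv e) u : γ) = e u := rfl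
  have h2 : ((trueEquiv e) v : γ) = e v := rfl
  rw [← h1, ← h2]
  exact sameCycle_extendDomain (f := trueEquiv e)

theorem pc_card_cycleOf (e : β ≃ γ) (σ : Perm β) (z : β) :
    ((e.permCongr σ).cycleOf (e z)).support.card = (σ.cycleOf z).support.card := by
  rw [permCongr_eq_extend]
  exact card_support_cycleOf_extend σ (trueEquiv e) z

theorem pc_card_factors (e : β ≃ γ) (σ : Perm β) :
    (e.permCongr σ).cycleFactorsFinset.card = σ.cycleFactorsFinset.card := by
  rw [permCongr_eq_extend]
  exact card_factors_extend σ (trueEquiv e)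

theorem ECond_permCongr (e : β ≃ γ) (σ : Perm β) (j : ℕ) :
    ECond (e.permCongr σ) j ↔ ECond σ j := by
  unfold ECond
  constructor
  · rintro ⟨h1, h2, h3⟩
    refine ⟨fun z hz => h1 (e z) ?_, fun z => ?_, by rwa [pc_card_factors] at h3⟩
    · rw [pc_apply, hz]
    · have := h2 (e z)
      rwa [pc_card_cycleOf] at this
  · rintro ⟨h1, h2, h3⟩
    refine ⟨fun w hw => ?_, fun w => ?_, by rwa [pc_card_factors]⟩
    · have : e.permCongr σ (e (e.symm w)) = e (e.symm w) := by rwa [e.apply_symm_apply]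
      rw [pc_apply] at this
      exact h1 _ (e.injective this)
    · have := pc_card_cycleOf e σ (e.symm w)
      rw [e.apply_symm_apply] at this
      rw [this]
      exact h2 _

theorem MCond_permCongr (e : β ≃ γ) (σ : Perm β) (a : β) (m : ℕ) :
    MCond (e.permCongr σ) (e a) m ↔ MCond σ a m := by
  unfold MCond
  have hfix : e.permCongr σ (e a) = e a ↔ σ a = a := by
    rw [pc_apply]
    exact ⟨fun h => e.injective h, fun h => by rw [h]⟩
  constructor
  · rintro ⟨h1, h2, h3, h4⟩
    refine ⟨fun z hz => ?_, fun z hz => ?_, fun hz => ?_, ?_⟩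
    · have : e.permCongr σ (e z) = e z := by rw [pc_apply, hz]
      exact e.injective (h1 _ this)
    · have := h2 (e z) (by rwa [pc_sameCycle])
      rwa [pc_card_cycleOf] at this
    · have := h3 (by rwa [Ne, hfix])
      rwa [pc_card_cycleOf] at this
    · rw [pc_card_factors] at h4
      have hif : (if (e.permCongr σ) (e a) = e a then 1 else 0) = (if σ a = a then 1 else 0) := by
        by_cases hh : σ a = a
        · rw [if_pos hh, if_pos (hfix.mpr hh)]
        · rw [if_neg hh, if_neg (fun c => hh (hfix.mp c))]
      rw [hif] at h4
      exact h4
  · rintro ⟨h1, h2, h3, h4⟩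
    refine ⟨fun w hw => ?_, fun w hw => ?_, fun hz => ?_, ?_⟩
    · have : e.permCongr σ (e (e.symm w)) = e (e.symm w) := by rwa [e.apply_symm_apply]
      rw [pc_apply] at this
      have := h1 _ (e.injective this)
      rw [← this, e.apply_symm_apply]
    · have hw' : ¬ σ.SameCycle a (e.symm w) := by
        rw [← pc_sameCycle e]
        rwa [e.apply_symm_apply]
      have := h2 _ hw'
      have hc := pc_card_cycleOf e σ (e.symm w)
      rw [e.apply_symm_apply] at hc
      rwa [← hc] at this
    · have := h3 (fun c => hz (hfix.mpr c))
      rwa [← pc_card_cycleOf e] at this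
    · rw [pc_card_factors]
      have hif : (if (e.permCongr σ) (e a) = e a then 1 else 0) = (if σ a = a then 1 else 0) := by
        by_cases hh : σ a = a
        · rw [if_pos hh, if_pos (hfix.mpr hh)]
        · rw [if_neg hh, if_neg (fun c => hh (hfix.mp c))]
      rw [hif]
      exact h4

end Transport

section Steps

theorem card_pair_ne {u v : Option β} (h : u ≠ v) : ({u, v} : Finset (Option β)).card = 2 :=
  Finset.card_pair h

theorem step1_core (σ : Perm β) (a : β) (m : ℕ) :
    ECond (swap none (some a) * σ.optionCongr) (m+1) ↔ MCond σ a m := by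
  have hgx : σ.optionCongr none = none := oc_none σ
  have hxy : (none : Option β) ≠ some a := by simp
  by_cases hfa : σ a = a
  · -- case A : a is fixed by σ, new 2-cycle (none, some a)
    have hgy : σ.optionCongr (some a) = some a := (oc_fix_iff σ a).mpr hfa
    constructor
    · rintro ⟨h1, h2, h3⟩
      refine ⟨fun z hz => ?_, fun z hsz => ?_, fun c => absurd hfa c, ?_⟩
      · by_contra hza
        exact h1 (some z) ((A1 hgx hgy hxy (some z)).mpr
          ⟨(oc_fix_iff σ z).mpr hz, by simp, by simpa using hza⟩)
      · have hza : z ≠ a := fun h => hsz (h ▸ SameCycle.refl _ _)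
        have := h2 (some z)
        rwa [A3 hgx hgy hxy (by simp) (by simpa using hza), oc_card_cycleOf] at this
      · rw [if_pos hfa]
        rw [A2card hgx hgy hxy, oc_card_factors] at h3
        exact h3
    · rintro ⟨m1, m2, m3, m4⟩
      refine ⟨fun w => ?_, fun w => ?_, ?_⟩
      · rw [Ne, A1 hgx hgy hxy w]
        rintro ⟨hfix, hwn, hwa⟩
        cases w with
        | none => exact hwn rfl
        | some z => exact hwa (congrArg some (m1 z ((oc_fix_iff σ z).mp hfix)))
      · cases w with
        | none =>
          rw [A4x hgx hgy hxy, support_swap hxy, card_pair_ne hxy]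
          exact even_two
        | some z =>
          by_cases hza : z = a
          · subst hza
            rw [A4y hgx hgy hxy, support_swap hxy, card_pair_ne hxy]
            exact even_two
          · have hns : ¬ σ.SameCycle a z := fun hs => hza (hs.eq_of_left hfa).symm
            have := m2 z hns
            rwa [A3 hgx hgy hxy (by simp) (by simpa using hza), oc_card_cycleOf]
      · rw [A2card hgx hgy hxy, oc_card_factors]
        rw [if_pos hfa] at m4
        exact m4
  · -- case B : none is inserted into the cycle of a
    have hgy : σ.optionCongr (some a) ≠ some a := fun h => hfa ((oc_fix_iff σ a).mp h)
    have hxy' : Perm.SameCycle (swap none (some a) * σ.optionCongr) none (some a) :=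
      ⟨1, by rw [zpow_one, mul_apply, hgx, swap_apply_left]⟩
    constructor
    · rintro ⟨h1, h2, h3⟩
      refine ⟨fun z hz => ?_, fun z hsz => ?_, fun _ => ?_, ?_⟩
      · by_contra hza
        exact h1 (some z) ((B1 hgx hxy hgy (some z)).mpr
          ⟨(oc_fix_iff σ z).mpr hz, by simp⟩)
      · have hns : ¬ Perm.SameCycle σ.optionCongr (some a) (some z) := by
          rw [oc_sameCycle]; exact hsz
        have := h2 (some z)
        rwa [B4 hgx hxy hgy (by simp) hns, oc_card_cycleOf] at this
      · have := h2 (some a)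
        rw [B5card hgx hxy hgy, oc_card_cycleOf] at this
        rw [Nat.even_add_one] at this
        exact this
      · rw [if_neg hfa, add_zero]
        rw [B7 hgx hxy hgy, oc_card_factors] at h3
        exact h3
    · rintro ⟨m1, m2, m3, m4⟩
      refine ⟨fun w => ?_, fun w => ?_, ?_⟩
      · rw [Ne, B1 hgx hxy hgy w]
        rintro ⟨hfix, hwn⟩
        cases w with
        | none => exact hwn rfl
        | some z =>
          have hz := (oc_fix_iff σ z).mp hfix
          have hza := m1 z hz
          exact hfa (hza ▸ hz)
      · by_cases hs : Perm.SameCycle (swap none (some a) * σ.optionCongr) (some a) w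
        · rw [← hs.cycleOf_eq, B5card hgx hxy hgy, oc_card_cycleOf]
          rw [Nat.even_add_one]
          exact m3 hfa
        · have hwn : w ≠ none := by
            rintro rfl
            exact hs hxy'.symm
          have hns : ¬ Perm.SameCycle σ.optionCongr (some a) w := fun c =>
            hs (B3b hgx hxy c)
          obtain ⟨z, rfl⟩ := Option.ne_none_iff_exists'.mp hwn
          rw [B4 hgx hxy hgy (by simp) hns, oc_card_cycleOf]
          refine m2 z fun c => hns ?_
          rw [oc_sameCycle]; exact c
      · rw [B7 hgx hxy hgy, oc_card_factors]
        rw [if_neg hfa, add_zero] at m4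
        exact m4

theorem step1_iff (x : Option β) (σ : Perm β) (m : ℕ) :
    ECond (swap none x * σ.optionCongr) (m+1) ↔ ∃ a, x = some a ∧ MCond σ a m := by
  cases x with
  | none =>
    constructor
    · rintro ⟨h1, -, -⟩
      exfalso
      apply h1 none
      rw [mul_apply, oc_none]
      simp
    · rintro ⟨a, h, -⟩
      exact absurd h (by simp)
  | some a =>
    rw [step1_core]
    constructor
    · exact fun h => ⟨a, rfl, h⟩
    · rintro ⟨a', ha', h⟩
      have := Option.some.inj ha'
      rw [this]
      exact h

theorem step3_none (τ : Perm γ) (m : ℕ) :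
    MCond τ.optionCongr (none : Option γ) m ↔ ECond τ m := by
  constructor
  · rintro ⟨m1, m2, m3, m4⟩
    refine ⟨fun z hz => ?_, fun z => ?_, ?_⟩
    · exact absurd (m1 (some z) ((oc_fix_iff τ z).mpr hz)) (by simp)
    · have := m2 (some z) (by rw [oc_sameCycle_none]; simp)
      rwa [oc_card_cycleOf] at this
    · rw [if_pos (oc_none τ), oc_card_factors] at m4
      omega
  · rintro ⟨e1, e2, e3⟩
    refine ⟨fun w hw => ?_, fun w hw => ?_, fun c => absurd (oc_none τ) c, ?_⟩
    · cases w with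
      | none => rfl
      | some z => exact absurd ((oc_fix_iff τ z).mp hw) (e1 z)
    · cases w with
      | none => exact absurd (SameCycle.refl _ _) hw
      | some z => rw [oc_card_cycleOf]; exact e2 z
    · rw [if_pos (oc_none τ), oc_card_factors, e3]

theorem step3_some (b : γ) (τ : Perm γ) (m : ℕ) :
    MCond (swap none (some b) * τ.optionCongr) (none : Option γ) m ↔ ECond τ (m+1) := by
  have hgx : τ.optionCongr none = none := oc_none τ
  have hxy : (none : Option γ) ≠ some b := by simp
  have hπn : (swap none (some b) * τ.optionCongr) none = some b := by
    rw [mul_apply, oc_none, swap_apply_left]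
  have hπne : (swap none (some b) * τ.optionCongr) none ≠ none := by
    rw [hπn]; simp
  constructor
  · rintro ⟨m1, m2, m3, m4⟩
    -- first : τ is fixed-point free
    have hτ : ∀ z, τ z ≠ z := by
      intro z hz
      by_cases hzb : z = b
      · subst hzb
        have hgy : τ.optionCongr (some z) = some z := (oc_fix_iff τ z).mpr hz
        have := m3 hπne
        rw [A4x hgx hgy hxy, support_swap hxy, card_pair_ne hxy] at this
        exact this even_two
      · have : (swap none (some b) * τ.optionCongr) (some z) = some z := by
          rw [mul_apply, (oc_fix_iff τ z).mpr hz,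
            swap_apply_of_ne_of_ne (by simp) (by simpa using hzb)]
        exact absurd (m1 (some z) this) (by simp)
    have hgy : τ.optionCongr (some b) ≠ some b := fun h => hτ b ((oc_fix_iff τ b).mp h)
    have hxy' : Perm.SameCycle (swap none (some b) * τ.optionCongr) none (some b) :=
      ⟨1, by rw [zpow_one, mul_apply, hgx, swap_apply_left]⟩
    refine ⟨hτ, fun z => ?_, ?_⟩
    · by_cases hs : τ.SameCycle b z
      · have hc : τ.cycleOf b = τ.cycleOf z := hs.cycleOf_eq
        rw [← hc]
        have := m3 hπne
        rw [hxy'.cycleOf_eq, B5card hgx hxy hgy, oc_card_cycleOf, Nat.even_add_one,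
          not_not] at this
        exact this
      · have hns : ¬ Perm.SameCycle τ.optionCongr (some b) (some z) := by
          rw [oc_sameCycle]; exact hs
        have hnsπ : ¬ Perm.SameCycle (swap none (some b) * τ.optionCongr) none (some z) := by
          rw [B3d hgx hxy hgy]
          rintro (h | h)
          · exact absurd h (by simp)
          · exact hns h
        have := m2 (some z) hnsπ
        rwa [B4 hgx hxy hgy (by simp) hns, oc_card_cycleOf] at this
    · rw [if_neg hπne, add_zero, B7 hgx hxy hgy, oc_card_factors] at m4
      exact m4
  · rintro ⟨e1, e2, e3⟩
    have hgy : τ.optionCongr (some b) ≠ some b := fun h => e1 b ((oc_fix_iff τ b).mp h)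
    have hxy' : Perm.SameCycle (swap none (some b) * τ.optionCongr) none (some b) :=
      ⟨1, by rw [zpow_one, mul_apply, hgx, swap_apply_left]⟩
    refine ⟨fun w hw => ?_, fun w hw => ?_, fun _ => ?_, ?_⟩
    · rw [B1 hgx hxy hgy w] at hw
      obtain ⟨hfix, hwn⟩ := hw
      cases w with
      | none => rfl
      | some z => exact absurd ((oc_fix_iff τ z).mp hfix) (e1 z)
    · have hwn : w ≠ none := fun c => hw (c ▸ SameCycle.refl _ _)
      have hns : ¬ Perm.SameCycle τ.optionCongr (some b) w := by
        intro c
        exact hw (hxy'.trans (B3b hgx hxy c))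
      obtain ⟨z, rfl⟩ := Option.ne_none_iff_exists'.mp hwn
      rw [B4 hgx hxy hgy (by simp) hns, oc_card_cycleOf]
      exact e2 z
    · rw [hxy'.cycleOf_eq, B5card hgx hxy hgy, oc_card_cycleOf, Nat.even_add_one, not_not]
      exact e2 b
    · rw [if_neg hπne, add_zero, B7 hgx hxy hgy, oc_card_factors, e3]

end Steps

section Counting

theorem natCard_subtype_prod {X : Type*} [Fintype X] {Y : Type*} [Finite Y] (P : X → Y → Prop) :
    Nat.card {p : X × Y // P p.1 p.2} = ∑ x : X, Nat.card {y : Y // P x y} := by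
  classical
  rw [Nat.card_congr (Equiv.subtypeProdEquivSigmaSubtype P)]
  have : ∀ x : X, Fintype {y : Y // P x y} := fun x => Fintype.ofFinite _
  rw [Nat.card_eq_fintype_card, Fintype.card_sigma]
  exact Finset.sum_congr rfl fun x _ => (Nat.card_eq_fintype_card).symm

theorem card_MCond_eq (a b : β) (m : ℕ) :
    Nat.card {σ : Perm β // MCond σ a m} = Nat.card {σ : Perm β // MCond σ b m} := by
  refine Nat.card_congr (Equiv.subtypeEquiv (Equiv.permCongr (swap a b)) fun σ => ?_)
  rw [← MCond_permCongr (swap a b) σ a m, swap_apply_left]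

theorem step1_count (m : ℕ) (a₀ : β) :
    Nat.card {π : Perm (Option β) // ECond π (m+1)} =
      Fintype.card β * Nat.card {σ : Perm β // MCond σ a₀ m} := by
  have e1 : {π : Perm (Option β) // ECond π (m+1)} ≃
      {q : Option β × Perm β // ECond (Equiv.Perm.decomposeOption.symm q) (m+1)} :=
    Equiv.Perm.decomposeOption.subtypeEquiv fun π => by rw [Equiv.symm_apply_apply]
  rw [Nat.card_congr e1]
  rw [natCard_subtype_prod (fun x σ => ECond (Equiv.Perm.decomposeOption.symm (x, σ)) (m+1))]
  have hfib : ∀ x : Option β, Nat.card {σ : Perm β //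
      ECond (Equiv.Perm.decomposeOption.symm (x, σ)) (m+1)} =
      (if x = none then 0 else Nat.card {σ : Perm β // MCond σ a₀ m}) := by
    intro x
    cases x with
    | none =>
      rw [if_pos rfl]
      rw [Nat.card_eq_zero]
      left
      rw [isEmpty_subtype]
      intro σ
      rw [Equiv.Perm.decomposeOption_symm_apply, step1_iff]
      rintro ⟨a, h, -⟩
      exact absurd h (by simp)
    | some a =>
      rw [if_neg (by simp)]
      have e2 : {σ : Perm β // ECond (Equiv.Perm.decomposeOption.symm (some a, σ)) (m+1)} ≃
          {σ : Perm β // MCond σ a m} := by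
        refine Equiv.subtypeEquivRight fun σ => ?_
        rw [Equiv.Perm.decomposeOption_symm_apply, step1_core]
      rw [Nat.card_congr e2]
      exact card_MCond_eq a a₀ m
  rw [Finset.sum_congr rfl fun x _ => hfib x]
  rw [Fintype.sum_option]
  rw [if_pos rfl]
  simp only [if_neg (Option.some_ne_none _)]
  rw [Finset.sum_const, Finset.card_univ, smul_eq_mul, zero_add]

theorem step3_count (m : ℕ) :
    Nat.card {σ : Perm (Option γ) // MCond σ (none : Option γ) m} =
      Nat.card {τ : Perm γ // ECond τ m} +
        Fintype.card γ * Nat.card {τ : Perm γ // ECond τ (m+1)} := by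
  have e1 : {σ : Perm (Option γ) // MCond σ (none : Option γ) m} ≃
      {q : Option γ × Perm γ // MCond (Equiv.Perm.decomposeOption.symm q) (none : Option γ) m} :=
    Equiv.Perm.decomposeOption.subtypeEquiv fun σ => by rw [Equiv.symm_apply_apply]
  rw [Nat.card_congr e1]
  rw [natCard_subtype_prod
    (fun x τ => MCond (Equiv.Perm.decomposeOption.symm (x, τ)) (none : Option γ) m)]
  have hfib : ∀ x : Option γ, Nat.card {τ : Perm γ //
      MCond (Equiv.Perm.decomposeOption.symm (x, τ)) (none : Option γ) m} =
      (if x = none then Nat.card {τ : Perm γ // ECond τ m}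
        else Nat.card {τ : Perm γ // ECond τ (m+1)}) := by
    intro x
    cases x with
    | none =>
      rw [if_pos rfl]
      refine Nat.card_congr (Equiv.subtypeEquivRight fun τ => ?_)
      rw [Equiv.Perm.decomposeOption_symm_apply]
      rw [show (swap (none : Option γ) none * τ.optionCongr) = τ.optionCongr by
        rw [swap_self]; ext w; simp]
      exact step3_none τ m
    | some b =>
      rw [if_neg (by simp)]
      refine Nat.card_congr (Equiv.subtypeEquivRight fun τ => ?_)
      rw [Equiv.Perm.decomposeOption_symm_apply]
      exact step3_some b τ m
  rw [Finset.sum_congr rfl fun x _ => hfib x]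
  rw [Fintype.sum_option, if_pos rfl]
  simp only [if_neg (Option.some_ne_none _)]
  rw [Finset.sum_const, Finset.card_univ, smul_eq_mul]

theorem EC_congr (e : β ≃ γ) (j : ℕ) :
    Nat.card {σ : Perm β // ECond σ j} = Nat.card {σ : Perm γ // ECond σ j} := by
  refine Nat.card_congr (Equiv.subtypeEquiv (Equiv.permCongr e) fun σ => ?_)
  rw [ECond_permCongr]

theorem EC_option_option (m : ℕ) :
    Nat.card {π : Perm (Option (Option γ)) // ECond π (m+1)} =
      (Fintype.card γ + 1) * (Nat.card {τ : Perm γ // ECond τ m} +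
        Fintype.card γ * Nat.card {τ : Perm γ // ECond τ (m+1)}) := by
  rw [step1_count m (none : Option γ), step3_count, Fintype.card_option]

end Counting

section Main

theorem evenAll_iff (σ : Perm β) :
    (∀ c ∈ σ.cycleFactorsFinset, Even c.support.card) ↔
      ∀ z, Even (σ.cycleOf z).support.card := by
  constructor
  · intro h z
    by_cases hz : σ z = z
    · rw [(Equiv.Perm.cycleOf_eq_one_iff σ).mpr hz]
      simp
    · exact h _ (Equiv.Perm.cycleOf_mem_cycleFactorsFinset_iff.mpr (Equiv.Perm.mem_support.mpr hz))
  · intro h c hc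
    obtain ⟨z, hz⟩ := (Equiv.Perm.mem_cycleFactorsFinset_iff.mp hc).1.nonempty_support
    rw [Equiv.Perm.cycle_is_cycleOf hz hc]
    exact h z

theorem evenCyclePermCount_eq (n j : ℕ) :
    evenCyclePermCount n j = Nat.card {σ : Perm (Fin (2*n)) // ECond σ j} := by
  unfold evenCyclePermCount
  refine Nat.card_congr (Equiv.subtypeEquivRight fun σ => ?_)
  unfold ECond
  rw [evenAll_iff]

theorem rec_main (n m : ℕ) :
    evenCyclePermCount (n+1) (m+1) =
      (2*n+1) * (evenCyclePermCount n m + 2*n * evenCyclePermCount n (m+1)) := by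
  rw [evenCyclePermCount_eq, evenCyclePermCount_eq, evenCyclePermCount_eq]
  have e : Fin (2*(n+1)) ≃ Option (Option (Fin (2*n))) :=
    (finCongr (by ring : 2*(n+1) = 2*n+1+1)).trans
      ((finSuccEquiv (2*n+1)).trans (Equiv.optionCongr (finSuccEquiv (2*n))))
  rw [EC_congr e, EC_option_option, Fintype.card_fin]

theorem rec_zero (n : ℕ) : evenCyclePermCount (n+1) 0 = 0 := by
  rw [evenCyclePermCount_eq, Nat.card_eq_zero]
  left
  rw [isEmpty_subtype]
  intro σ hσp
  obtain ⟨h1, h2, h3⟩ := hσp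
  have hσ : σ = 1 :=
    Equiv.Perm.cycleFactorsFinset_eq_empty_iff.mp (Finset.card_eq_zero.mp h3)
  have hlt : (0 : ℕ) < 2*(n+1) := by omega
  exact h1 ⟨0, hlt⟩ (by rw [hσ]; rfl)

theorem base0 : evenCyclePermCount 0 0 = 1 := by
  rw [evenCyclePermCount_eq]
  have hall : ∀ σ : Perm (Fin (2*0)), ECond σ 0 := by
    intro σ
    have hσ : σ = 1 := by ext z; exact absurd z.2 (by omega)
    refine ⟨fun z => absurd z.2 (by omega), fun z => absurd z.2 (by omega), ?_⟩
    rw [hσ, Equiv.Perm.cycleFactorsFinset_one]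
    rfl
  rw [Nat.card_congr (Equiv.subtypeUnivEquiv hall)]
  rw [Nat.card_eq_fintype_card, Fintype.card_perm]
  rfl

theorem base_succ (j : ℕ) : evenCyclePermCount 0 (j+1) = 0 := by
  rw [evenCyclePermCount_eq, Nat.card_eq_zero]
  left
  rw [isEmpty_subtype]
  intro σ hσp
  obtain ⟨-, -, h3⟩ := hσp
  have hσ : σ = 1 := by ext z; exact absurd z.2 (by omega)
  rw [hσ, Equiv.Perm.cycleFactorsFinset_one] at h3
  exact Nat.noConfusion h3

theorem vanish : ∀ n j : ℕ, n < j → evenCyclePermCount n j = 0 := by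
  intro n
  induction n with
  | zero =>
    intro j hj
    obtain ⟨k, rfl⟩ : ∃ k, j = k + 1 := ⟨j - 1, by omega⟩
    exact base_succ k
  | succ n ih =>
    intro j hj
    obtain ⟨k, rfl⟩ : ∃ k, j = k + 1 := ⟨j - 1, by omega⟩
    rw [rec_main, ih k (by omega), ih (k+1) (by omega)]
    simp

theorem aux0 (n : ℕ) : 2*n * evenCyclePermCount n 0 = 0 := by
  cases n with
  | zero => simp
  | succ n => rw [rec_zero, mul_zero]

theorem dfac_succ (n : ℕ) :
    Nat.doubleFactorial (2*(n+1)-1) = (2*n+1) * Nat.doubleFactorial (2*n-1) := by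
  cases n with
  | zero => rfl
  | succ n =>
    have e1 : 2*(n+1+1)-1 = (2*n+1)+2 := by omega
    have e2 : 2*(n+1)-1 = 2*n+1 := by omega
    have e3 : 2*(n+1)+1 = (2*n+1)+2 := by omega
    rw [e1, e2, e3, Nat.doubleFactorial_add_two]

theorem sum_poly : ∀ n : ℕ,
    ∑ j ∈ Finset.range (n+1), (C (evenCyclePermCount n j) : Polynomial ℕ) * X ^ j =
      C (Nat.doubleFactorial (2*n-1)) * ∏ k ∈ Finset.range n, (X + C (2*k : ℕ)) := by
  intro n
  induction n with
  | zero => simp [base0]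
  | succ n IH =>
    have hL : ∑ j ∈ Finset.range (n+1+1), (C (evenCyclePermCount (n+1) j) : Polynomial ℕ) * X ^ j
        = ∑ j ∈ Finset.range (n+1),
            (C ((2*n+1) * evenCyclePermCount n j) * X ^ (j+1)
              + C (((2*n+1)*(2*n)) * evenCyclePermCount n (j+1)) * X ^ (j+1)) := by
      rw [Finset.sum_range_succ' _ (n+1)]
      rw [rec_zero]
      simp only [map_zero, zero_mul, add_zero]
      refine Finset.sum_congr rfl fun j _ => ?_
      rw [rec_main]
      rw [show (2*n+1) * (evenCyclePermCount n j + 2*n * evenCyclePermCount n (j+1)) =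
        (2*n+1) * evenCyclePermCount n j + ((2*n+1)*(2*n)) * evenCyclePermCount n (j+1) by ring]
      rw [C_add, add_mul]
    rw [hL, Finset.sum_add_distrib]
    have hshift : ∑ j ∈ Finset.range (n+1),
        (C (((2*n+1)*(2*n)) * evenCyclePermCount n (j+1)) : Polynomial ℕ) * X ^ (j+1)
        = ∑ j ∈ Finset.range (n+1),
            (C (((2*n+1)*(2*n)) * evenCyclePermCount n j) : Polynomial ℕ) * X ^ j := by
      rw [Finset.sum_range_succ]
      rw [Finset.sum_range_succ' (fun j => (C (((2*n+1)*(2*n)) * evenCyclePermCount n j)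
        : Polynomial ℕ) * X ^ j) n]
      rw [vanish n (n+1) (by omega)]
      rw [show ((2*n+1)*(2*n)) * evenCyclePermCount n 0 = 0 by
        rw [show ((2*n+1)*(2*n)) * evenCyclePermCount n 0 =
          (2*n+1) * (2*n * evenCyclePermCount n 0) by ring, aux0, mul_zero]]
      simp
    rw [hshift]
    have h1 : ∑ j ∈ Finset.range (n+1),
        (C ((2*n+1) * evenCyclePermCount n j) : Polynomial ℕ) * X ^ (j+1)
        = C ((2*n+1 : ℕ)) * ((∑ j ∈ Finset.range (n+1),
            (C (evenCyclePermCount n j) : Polynomial ℕ) * X ^ j) * X) := by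
      rw [Finset.sum_mul, Finset.mul_sum]
      refine Finset.sum_congr rfl fun j _ => ?_
      rw [C_mul, pow_succ]
      ring
    have h2 : ∑ j ∈ Finset.range (n+1),
        (C (((2*n+1)*(2*n)) * evenCyclePermCount n j) : Polynomial ℕ) * X ^ j
        = C ((2*n+1 : ℕ)) * C ((2*n : ℕ)) * ∑ j ∈ Finset.range (n+1),
            (C (evenCyclePermCount n j) : Polynomial ℕ) * X ^ j := by
      rw [Finset.mul_sum]
      refine Finset.sum_congr rfl fun j _ => ?_
      rw [C_mul, C_mul]
      ring
    rw [h1, h2, IH, dfac_succ, Finset.prod_range_succ]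
    simp only [C_mul]
    ring
end Main

end ECAux

open ECAux in
/-- The generating polynomial, by number of cycles, of permutations of `[2n]` with all
cycle lengths even factors as `(2n−1)!!·Π_{k=1}^n (t + 2k − 2)`.  Equivalently,
`a_{n,j} = ((2n−1)!!)²·P(Σ X_k = j)` for independent Bernoulli `X_k` of mean `1/(2k−1)`. -/
theorem even_cycle_permutations_generating_polynomial (n : ℕ) :
    ∑ j ∈ Finset.range (2 * n + 1),
      (C (evenCyclePermCount n j) : Polynomial ℕ) * X ^ j =
    C (Nat.doubleFactorial (2 * n - 1)) * ∏ k ∈ Finset.range n, (X + C (2 * k)) := by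
  have hsub : Finset.range (n+1) ⊆ Finset.range (2*n+1) := by
    intro j hj
    rw [Finset.mem_range] at hj ⊢
    omega
  rw [← Finset.sum_subset hsub (fun j hj hj' => ?_)]
  · exact sum_poly n
  · rw [Finset.mem_range] at hj'
    rw [vanish n j (by omega), map_zero, zero_mul]
end

section
/- The expected number of cycles of the composition of two independent uniformly random fixed-point-free involutions of [2n] equals 2·H_{2n} − H_n, where H_m is the m-th harmonic number. -/
open Equiv

/-- The number of cycles of a permutation, counting fixed points as 1-cycles. -/
def numCycles {n : ℕ} (π : Equiv.Perm (Fin n)) : ℕ :=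
  π.cycleFactorsFinset.card + (Finset.univ.filter fun x => π x = x).card

/-- The fixed-point-free involutions of `[m]`. -/
noncomputable def fpfInvolutions (m : ℕ) : Finset (Equiv.Perm (Fin m)) :=
  letI := Classical.decEq (Equiv.Perm (Fin m))
  Finset.univ.filter fun σ => σ * σ = 1 ∧ ∀ i, σ i ≠ i

/-- The `m`-th harmonicNum number `H_m = Σ_{j=1}^m 1/j`. -/
def harmonicNum (m : ℕ) : ℚ := ∑ j ∈ Finset.Icc 1 m, (1 : ℚ) / j

/-!
Fix `σ` and sum `numCycles (τ * σ)` over `τ`, splitting the `τ` according to the partner `b` of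
a point `x`. If `b = σ x`, removing the pair `{x, b}` from both involutions leaves `τ * σ`
unchanged. Otherwise, removing `{x, b}` from `τ` and putting `b` in the place of `σ x` in `σ` gives
involutions `τ'`, `σ̃` of the remaining points, and `τ * σ` is `τ' * σ̃` followed by two
transpositions, each of which joins a fixed point to a cycle: two cycles fewer. On `Fin n`, with
`N_k = (2k-1)‼` involutions supported on `2k` points, the sum `S_k` therefore satisfies
`S_{k+1} = (2k+1) S_k - 4k N_k`, solved by `S_k = N_k (2 H_{2k} - H_k + (n - 2k))` for every `σ`.
-/

open Finset
open scoped Nat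

namespace Equiv.Perm

variable {α : Type*} [DecidableEq α]

theorem IsCycle.mul_swap_of_apply_eq_self [Finite α] {c : Perm α} (hc : c.IsCycle) {i j : α}
    (hi : c i = i) (hj : c j ≠ j) : (c * swap i j).IsCycle := by
  set g := c * swap i j
  have hij : i ≠ j := fun h => hj (h ▸ hi)
  have hgj : g j = i := by simp [g, hi]
  have hgi : g i = c j := by simp [g]
  have hreach : ∀ n : ℕ, g.SameCycle j ((c ^ n) j) := by
    intro n
    induction n with
    | zero => rfl
    | succ n ih =>
      rw [pow_succ', mul_apply]
      by_cases hz : (c ^ n) j = j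
      · rw [hz, ← hgi, ← hgj, sameCycle_apply_right, sameCycle_apply_right]
      · have hzi : (c ^ n) j ≠ i := fun h =>
          hij ((c ^ n).injective (h.trans (pow_apply_eq_self_of_apply_eq_self hi n).symm)).symm
        rwa [← swap_apply_of_ne_of_ne hzi hz, ← mul_apply, sameCycle_apply_right]
  refine ⟨j, by rw [hgj]; exact hij, fun y hy => ?_⟩
  by_cases hyj : y = j
  · rw [hyj]
  by_cases hyi : y = i
  · rw [hyi, ← hgj, sameCycle_apply_right]
  have hcy : c y ≠ y := by rwa [mul_apply, swap_apply_of_ne_of_ne hyi hyj] at hy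
  obtain ⟨n, rfl⟩ := (hc.sameCycle hj hcy).exists_nat_pow_eq
  exact hreach n

theorem disjoint_swap_of_apply_eq_self {f : Perm α} {x y : α}
    (hx : f x = x) (hy : f y = y) : f.Disjoint (swap x y) := fun z => by
  rcases eq_or_ne z x with rfl | hzx
  · exact Or.inl hx
  rcases eq_or_ne z y with rfl | hzy
  · exact Or.inl hy
  exact Or.inr (swap_apply_of_ne_of_ne hzx hzy)

theorem card_cycleType_mul_swap_of_apply_eq_self [Fintype α] {π : Perm α} {i j : α}
    (hi : π i = i) (hj : π j = j) (hij : i ≠ j) :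
    Multiset.card (π * swap i j).cycleType = Multiset.card π.cycleType + 1 := by
  rw [(disjoint_swap_of_apply_eq_self hi hj).cycleType_mul, (isCycle_swap hij).cycleType,
    Multiset.card_add, Multiset.card_singleton]

-- `π * swap i j` inserts `i` into the cycle of `π` through `j`.
theorem card_cycleType_mul_swap_of_apply_ne_self [Fintype α] {π : Perm α} {i j : α}
    (hi : π i = i) (hj : π j ≠ j) :
    Multiset.card (π * swap i j).cycleType = Multiset.card π.cycleType := by
  set c := π.cycleOf j
  set d := π * c⁻¹
  have hc : c.IsCycle := isCycle_cycleOf π hj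
  have hci : c i = i := by simp [c, cycleOf_apply, hi]
  have hcj : c j ≠ j := by rwa [cycleOf_apply_self]
  have hdc : d.Disjoint c := disjoint_mul_inv_of_mem_cycleFactorsFinset
    (cycleOf_mem_cycleFactorsFinset_iff.mpr (mem_support.mpr hj))
  have hdi : d i = i := by rw [mul_apply, inv_eq_iff_eq.mpr hci.symm, hi]
  have hdj : d j = j := (hdc j).resolve_right hcj
  have hdc' : d.Disjoint (c * swap i j) := fun x => by
    rcases eq_or_ne x i with rfl | hxi
    · exact Or.inl hdi
    rcases eq_or_ne x j with rfl | hxj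
    · exact Or.inl hdj
    simpa [swap_apply_of_ne_of_ne hxi hxj] using hdc x
  have hπ : π = d * c := by simp [d]
  rw [hπ, mul_assoc, hdc'.cycleType_mul, hdc.cycleType_mul,
    (hc.mul_swap_of_apply_eq_self hci hcj).cycleType, hc.cycleType]
  simp only [Multiset.card_add, Multiset.card_singleton]

end Equiv.Perm

theorem Finset.map_swap_erase {α : Type*} [DecidableEq α] {t : Finset α} {a b : α}
    (ha : a ∈ t) (hb : b ∈ t) : (t.erase a).map (swap a b).toEmbedding = t.erase b := by
  ext z
  rw [mem_map_equiv, symm_swap, mem_erase, mem_erase, Ne, swap_apply_eq_iff, swap_apply_left]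
  by_cases hza : z = a
  · simp [hza, hb, ha]
  by_cases hzb : z = b
  · simp [hzb]
  simp [swap_apply_of_ne_of_ne hza hzb, hzb]

open Equiv.Perm

theorem numCycles_eq_card_cycleType_add {n : ℕ} (π : Perm (Fin n)) :
    numCycles π = Multiset.card π.cycleType + #π.supportᶜ := by
  rw [numCycles, cycleType_def, Multiset.card_map]
  congr 2
  ext x
  simp

theorem numCycles_one {n : ℕ} : numCycles (1 : Perm (Fin n)) = n := by
  simp [numCycles_eq_card_cycleType_add]

theorem numCycles_mul_swap_add_one {n : ℕ} {π : Perm (Fin n)} {i j : Fin n} (hi : π i = i)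
    (hij : i ≠ j) : numCycles (π * swap i j) + 1 = numCycles π := by
  have hπj : π j ≠ i := fun h => hij (π.injective (hi.trans h.symm))
  have hfix : (π * swap i j).supportᶜ = π.supportᶜ \ {i, j} := by
    ext x
    by_cases hxi : x = i
    · subst hxi; simp [hπj]
    by_cases hxj : x = j
    · subst hxj; simp [hi, hij]
    simp [swap_apply_of_ne_of_ne hxi hxj, hxi, hxj]
  rw [numCycles_eq_card_cycleType_add, numCycles_eq_card_cycleType_add, hfix]
  by_cases hj : π j = j
  · have hsub : {i, j} ⊆ π.supportᶜ := by simp [Finset.insert_subset_iff, hi, hj]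
    rw [card_cycleType_mul_swap_of_apply_eq_self hi hj hij, ← card_sdiff_add_card_eq_card hsub,
      card_pair hij]
    ring
  · have hsdiff : π.supportᶜ \ {i, j} = π.supportᶜ.erase i := by
      ext x; by_cases hxj : x = j <;> simp [hxj, hj, and_comm]
    rw [card_cycleType_mul_swap_of_apply_ne_self hi hj, hsdiff,
      ← card_erase_add_one (show i ∈ π.supportᶜ by simp [hi])]
    ring

section FpfInvolutionsOn

variable {α : Type*} [Fintype α] [DecidableEq α]

def fpfInvolutionsOn (s : Finset α) : Finset (Perm α) :=
  {σ | σ * σ = 1 ∧ σ.support = s}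

variable {s : Finset α} {σ : Perm α}

@[simp]
theorem mem_fpfInvolutionsOn :
    σ ∈ fpfInvolutionsOn s ↔ σ * σ = 1 ∧ σ.support = s := by
  simp [fpfInvolutionsOn]

theorem fpfInvolutionsOn_empty : fpfInvolutionsOn (∅ : Finset α) = {1} := by
  ext σ
  simp only [mem_fpfInvolutionsOn, support_eq_empty_iff, mem_singleton]
  exact ⟨And.right, fun h => ⟨by rw [h, one_mul], h⟩⟩

theorem apply_apply_of_mem_fpfInvolutionsOn (hσ : σ ∈ fpfInvolutionsOn s)
    (x : α) : σ (σ x) = x := by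
  rw [← mul_apply, (mem_fpfInvolutionsOn.mp hσ).1, one_apply]

theorem mul_swap_mem_fpfInvolutionsOn_iff {x y : α} (hxy : x ≠ y) (hx : σ x = x)
    (hy : σ y = y) (hxs : x ∈ s) (hys : y ∈ s) :
    σ * swap x y ∈ fpfInvolutionsOn s ↔ σ ∈ fpfInvolutionsOn ((s.erase x).erase y) := by
  have hd := disjoint_swap_of_apply_eq_self hx hy
  have hsq : σ * swap x y * (σ * swap x y) = σ * σ := by
    rw [hd.commute.symm.mul_mul_mul_comm, swap_mul_self, mul_one]
  have hxσ : x ∉ σ.support := notMem_support.mpr hx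
  have hyσ : y ∉ σ.support := notMem_support.mpr hy
  simp only [mem_fpfInvolutionsOn, hsq, hd.support_mul, support_swap hxy]
  refine and_congr_right' ⟨fun h => ?_, fun h => ?_⟩
  · subst h
    ext z
    by_cases hzx : z = x
    · simp [hzx, hxσ]
    by_cases hzy : z = y
    · simp [hzy, hyσ]
    simp [hzx, hzy]
  · rw [h]
    ext z
    by_cases hzx : z = x
    · simp [hzx, hxs]
    by_cases hzy : z = y
    · simp [hzy, hys]
    simp [hzx, hzy]

theorem apply_eq_self_of_mem_fpfInvolutionsOn (hσ : σ ∈ fpfInvolutionsOn s)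
    {z : α} (hz : z ∉ s) : σ z = z :=
  notMem_support.mp ((mem_fpfInvolutionsOn.mp hσ).2 ▸ hz)

theorem apply_mem_erase_of_mem_fpfInvolutionsOn (hσ : σ ∈ fpfInvolutionsOn s)
    {x : α} (hx : x ∈ s) : σ x ∈ s.erase x := by
  rw [← (mem_fpfInvolutionsOn.mp hσ).2] at hx ⊢
  exact mem_erase.mpr ⟨mem_support.mp hx, apply_mem_support.mpr hx⟩

theorem mul_swap_apply_mem_fpfInvolutionsOn (hσ : σ ∈ fpfInvolutionsOn s) {x : α}
    (hx : x ∈ s) : σ * swap x (σ x) ∈ fpfInvolutionsOn ((s.erase x).erase (σ x)) := by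
  have hx' : (σ * swap x (σ x)) x = x := by
    rw [mul_apply, swap_apply_left, apply_apply_of_mem_fpfInvolutionsOn hσ]
  have hy' : (σ * swap x (σ x)) (σ x) = σ x := by rw [mul_apply, swap_apply_right]
  have hxy := mem_erase.mp (apply_mem_erase_of_mem_fpfInvolutionsOn hσ hx)
  rwa [← mul_swap_mem_fpfInvolutionsOn_iff hxy.1.symm hx' hy' hx hxy.2, mul_swap_mul_self]

theorem sum_fpfInvolutionsOn_eq_sum_partner {M : Type*} [AddCommMonoid M] {x : α}
    (hx : x ∈ s) (f : Perm α → M) :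
    ∑ σ ∈ fpfInvolutionsOn s, f σ =
      ∑ y ∈ s.erase x, ∑ σ ∈ fpfInvolutionsOn ((s.erase x).erase y), f (σ * swap x y) := by
  rw [← sum_fiberwise_of_maps_to fun σ hσ => apply_mem_erase_of_mem_fpfInvolutionsOn hσ hx]
  refine sum_congr rfl fun y hy => ?_
  obtain ⟨hyx, hys⟩ := mem_erase.mp hy
  refine sum_nbij' (· * swap x y) (· * swap x y) (fun σ hσ => ?_) (fun σ hσ => ?_)
    (fun σ _ => mul_swap_mul_self x y σ) (fun σ _ => mul_swap_mul_self x y σ)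
    (fun σ _ => by rw [mul_swap_mul_self])
  · obtain ⟨hσs, rfl⟩ := mem_filter.mp hσ
    exact mul_swap_apply_mem_fpfInvolutionsOn hσs hx
  · have hσx := apply_eq_self_of_mem_fpfInvolutionsOn hσ (z := x) (by simp)
    have hσy := apply_eq_self_of_mem_fpfInvolutionsOn hσ (z := y) (by simp)
    rw [mem_filter, mul_swap_mem_fpfInvolutionsOn_iff hyx.symm hσx hσy hx hys]
    exact ⟨hσ, by rw [mul_apply, swap_apply_left, hσy]⟩

theorem card_fpfInvolutionsOn {k : ℕ} (hs : #s = 2 * k) :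
    #(fpfInvolutionsOn s) = (2 * k - 1)‼ := by
  induction k generalizing s with
  | zero => rw [card_eq_zero.mp hs, fpfInvolutionsOn_empty, card_singleton]; rfl
  | succ k ih =>
    obtain ⟨x, hx⟩ := card_pos.mp (by omega : 0 < #s)
    have hcard : #(s.erase x) = 2 * k + 1 := by rw [card_erase_of_mem hx]; omega
    calc #(fpfInvolutionsOn s)
        = ∑ y ∈ s.erase x, #(fpfInvolutionsOn ((s.erase x).erase y)) := by
          simpa only [card_eq_sum_ones] using sum_fpfInvolutionsOn_eq_sum_partner hx (fun _ => 1)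
      _ = ∑ y ∈ s.erase x, (2 * k - 1)‼ :=
          sum_congr rfl fun y hy => ih (by rw [card_erase_of_mem hy, hcard]; omega)
      _ = (2 * (k + 1) - 1)‼ := by
          rw [sum_const, hcard, smul_eq_mul, show 2 * (k + 1) - 1 = 2 * k + 1 by omega,
            Nat.doubleFactorial_add_one]

theorem conj_mem_fpfInvolutionsOn (g : Perm α) (hσ : σ ∈ fpfInvolutionsOn s) :
    g * σ * g⁻¹ ∈ fpfInvolutionsOn (s.map g.toEmbedding) := by
  obtain ⟨hsq, hsupp⟩ := mem_fpfInvolutionsOn.mp hσ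
  refine mem_fpfInvolutionsOn.mpr ⟨?_, by rw [support_conj, hsupp]⟩
  calc g * σ * g⁻¹ * (g * σ * g⁻¹) = g * (σ * σ) * g⁻¹ := by group
    _ = 1 := by rw [hsq, mul_one, mul_inv_cancel]

theorem conj_swap_mem_fpfInvolutionsOn_erase {t : Finset α} {a b : α}
    (hσ : σ ∈ fpfInvolutionsOn (t.erase a)) (ha : a ∈ t) (hb : b ∈ t) :
    swap a b * σ * swap a b ∈ fpfInvolutionsOn (t.erase b) := by
  rw [← map_swap_erase ha hb]
  simpa only [swap_inv] using conj_mem_fpfInvolutionsOn (swap a b) hσ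

end FpfInvolutionsOn

-- `swap (σ x) b * (σ * swap x (σ x)) * swap (σ x) b` is `σ` with its pairs `{x, σ x}` and
-- `{b, σ b}` replaced by `{σ x, σ b}`.
theorem numCycles_mul_swap_mul_add_two {n : ℕ} {s : Finset (Fin n)} {σ τ : Perm (Fin n)}
    {x b : Fin n} (hσ : σ ∈ fpfInvolutionsOn s) (hx : x ∈ s)
    (hb : b ∈ (s.erase x).erase (σ x)) (hτ : τ ∈ fpfInvolutionsOn ((s.erase x).erase b)) :
    numCycles (τ * swap x b * σ) + 2 =
      numCycles (τ * (swap (σ x) b * (σ * swap x (σ x)) * swap (σ x) b)) := by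
  set a := σ x
  obtain ⟨hba, hbx, hbs⟩ : b ≠ a ∧ b ≠ x ∧ b ∈ s := by simpa using hb
  have hσa : σ a = x := apply_apply_of_mem_fpfInvolutionsOn hσ x
  have hσu : σ (σ b) = b := apply_apply_of_mem_fpfInvolutionsOn hσ b
  have hxa : x ≠ a := (mem_erase.mp (apply_mem_erase_of_mem_fpfInvolutionsOn hσ hx)).1.symm
  have hub : σ b ≠ b := (mem_erase.mp (apply_mem_erase_of_mem_fpfInvolutionsOn hσ hbs)).1
  have hua : σ b ≠ a := fun h => hbx (by rw [← hσu, h, hσa])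
  have hux : σ b ≠ x := fun h => hba (by rw [← hσu, h])
  have hconj : ∀ y z, swap a b * swap y z * swap a b = swap (swap a b y) (swap a b z) := by
    intro y z; rw [swap_apply_apply, swap_inv]
  have hσ' : σ * swap x a * swap x (σ b) = swap a x * swap a b * σ := by
    rw [mul_swap_eq_swap_mul σ x a, hσa, mul_assoc, mul_swap_eq_swap_mul σ x (σ b), hσu, mul_assoc]
  have hσ_eq : swap x b * σ = swap a b * (σ * swap x a) * swap a b * swap x (σ b) * swap a b := by
    calc swap x b * σ = swap a b * (swap a x * swap a b * σ) := by
          rw [← mul_assoc, ← mul_assoc, hconj, swap_apply_left,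
            swap_apply_of_ne_of_ne hxa hbx.symm, swap_comm]
      _ = swap a b * (σ * swap x a) * (swap a b * swap x (σ b) * swap a b) := by
          rw [← hσ', hconj, swap_apply_of_ne_of_ne hxa hbx.symm, swap_apply_of_ne_of_ne hua hub]
          group
      _ = _ := by group
  set π := τ * (swap a b * (σ * swap x a) * swap a b)
  have hτx : τ x = x := apply_eq_self_of_mem_fpfInvolutionsOn hτ (by simp)
  have hτb : τ b = b := apply_eq_self_of_mem_fpfInvolutionsOn hτ (by simp)
  have hπx : π x = x := by
    simp [π, swap_apply_of_ne_of_ne hxa hbx.symm, hσa, hτx]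
  have hπb : (π * swap x (σ b)) b = b := by
    simp [π, swap_apply_of_ne_of_ne hbx hub.symm, a, hτb]
  have h₁ := numCycles_mul_swap_add_one hπx hux.symm
  have h₂ := numCycles_mul_swap_add_one hπb hba
  rw [swap_comm b a] at h₂
  have hτσ : τ * swap x b * σ = π * swap x (σ b) * swap a b := by
    simp only [mul_assoc, π] at hσ_eq ⊢
    rw [hσ_eq]
  rw [hτσ]
  omega

theorem harmonicNum_eq_harmonic (m : ℕ) : harmonicNum m = harmonic m := by
  induction m with
  | zero => simp [harmonicNum]
  | succ m ih =>
    rw [harmonic_succ, ← ih, harmonicNum, harmonicNum, sum_Icc_succ_top (by omega)]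
    simp

theorem two_mul_harmonic_two_mul_sub_harmonic_succ (k : ℕ) :
    2 * harmonic (2 * (k + 1)) - harmonic (k + 1) =
      2 * harmonic (2 * k) - harmonic k + 2 / (2 * k + 1) := by
  rw [show 2 * (k + 1) = 2 * k + 1 + 1 by ring, harmonic_succ, harmonic_succ, harmonic_succ]
  push_cast
  field_simp
  ring

theorem sum_numCycles_mul_of_mem_fpfInvolutionsOn {n k : ℕ} {s : Finset (Fin n)}
    (hs : #s = 2 * k) {σ : Perm (Fin n)} (hσ : σ ∈ fpfInvolutionsOn s) :
    ∑ τ ∈ fpfInvolutionsOn s, (numCycles (τ * σ) : ℚ) =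
      (2 * k - 1)‼ * (2 * harmonic (2 * k) - harmonic k + (n - 2 * k)) := by
  induction k generalizing s σ with
  | zero =>
    rw [card_eq_zero.mp hs, fpfInvolutionsOn_empty] at hσ ⊢
    simp [mem_singleton.mp hσ, numCycles_one]
  | succ k ih =>
    obtain ⟨x, hx⟩ := card_pos.mp (by omega : 0 < #s)
    set a := σ x
    have ha : a ∈ s.erase x := apply_mem_erase_of_mem_fpfInvolutionsOn hσ hx
    have hcard : ∀ y ∈ s.erase x, #((s.erase x).erase y) = 2 * k := fun y hy => by
      rw [card_erase_of_mem hy, card_erase_of_mem hx]; omega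
    set d : ℚ := ↑(2 * k - 1)‼
    set V : ℚ := d * (2 * harmonic (2 * k) - harmonic k + (n - 2 * k))
    have hσa : σ a = x := apply_apply_of_mem_fpfInvolutionsOn hσ x
    have hσ' := mul_swap_apply_mem_fpfInvolutionsOn hσ hx
    have hpartner : ∑ τ ∈ fpfInvolutionsOn ((s.erase x).erase a),
        (numCycles (τ * swap x a * σ) : ℚ) = V := by
      rw [← ih (hcard a ha) hσ']
      refine sum_congr rfl fun τ _ => ?_
      rw [mul_assoc, mul_swap_eq_swap_mul σ, hσa, swap_comm]
    have hother : ∀ b ∈ (s.erase x).erase a, ∑ τ ∈ fpfInvolutionsOn ((s.erase x).erase b),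
        (numCycles (τ * swap x b * σ) : ℚ) = V - 2 * d := by
      intro b hb
      have hb' : b ∈ s.erase x := mem_of_mem_erase hb
      have hσ'' := conj_swap_mem_fpfInvolutionsOn_erase hσ' ha hb'
      have hτσ : ∀ τ ∈ fpfInvolutionsOn ((s.erase x).erase b), (numCycles (τ * swap x b * σ) : ℚ)
          = numCycles (τ * (swap a b * (σ * swap x a) * swap a b)) - 2 := fun τ hτ =>
        eq_sub_of_add_eq (by exact_mod_cast numCycles_mul_swap_mul_add_two hσ hx hb hτ)
      rw [sum_congr rfl hτσ, sum_sub_distrib, ih (hcard b hb') hσ'', sum_const,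
        card_fpfInvolutionsOn (hcard b hb'), nsmul_eq_mul, mul_comm]
    calc ∑ τ ∈ fpfInvolutionsOn s, (numCycles (τ * σ) : ℚ)
        = ∑ b ∈ s.erase x, ∑ τ ∈ fpfInvolutionsOn ((s.erase x).erase b),
            (numCycles (τ * swap x b * σ) : ℚ) :=
          sum_fpfInvolutionsOn_eq_sum_partner hx _
      _ = V + ∑ _b ∈ (s.erase x).erase a, (V - 2 * d) := by
          rw [← add_sum_erase _ _ ha, hpartner, sum_congr rfl hother]
      _ = _ := by
          rw [sum_const, hcard a ha, nsmul_eq_mul, show 2 * (k + 1) - 1 = 2 * k + 1 by omega,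
            Nat.doubleFactorial_add_one,
            two_mul_harmonic_two_mul_sub_harmonic_succ]
          push_cast
          field_simp
          ring

theorem expected_cycles_of_fpf_composition_general (n : ℕ) :
    (∑ σ ∈ fpfInvolutions (2 * n), ∑ τ ∈ fpfInvolutions (2 * n),
        (numCycles (τ * σ) : ℚ)) / ((fpfInvolutions (2 * n)).card ^ 2) =
    2 * harmonicNum (2 * n) - harmonicNum n := by
  have hfpf : fpfInvolutions (2 * n) = fpfInvolutionsOn univ := by
    ext σ
    simp [fpfInvolutions, eq_univ_iff_forall]
  have hcard : #(univ : Finset (Fin (2 * n))) = 2 * n := by simp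
  have hd : ((2 * n - 1)‼ : ℚ) ≠ 0 := by positivity
  rw [hfpf, sum_congr rfl fun σ hσ => sum_numCycles_mul_of_mem_fpfInvolutionsOn hcard hσ,
    sum_const, card_fpfInvolutionsOn hcard, nsmul_eq_mul, harmonicNum_eq_harmonic,
    harmonicNum_eq_harmonic]
  push_cast
  field_simp
  ring

/-- The expected number of cycles of the composition of two independent uniformly random
fixed-point-free involutions of `[2n]` is `2·H_{2n} − H_n`. -/
theorem expected_cycles_of_fpf_composition (n : ℕ) (hn : 1 ≤ n) :
    (∑ σ ∈ fpfInvolutions (2 * n), ∑ τ ∈ fpfInvolutions (2 * n),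
        (numCycles (τ * σ) : ℚ)) / ((fpfInvolutions (2 * n)).card ^ 2) =
    2 * harmonicNum (2 * n) - harmonicNum n :=
  expected_cycles_of_fpf_composition_general n
end
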